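/- arXiv:2506.11336 — 8 statements merged into one kernel-verified Lean document; each statement's English description precedes it below -/
import Mathlib

section
/- Suppose f is L-Lipschitz and the population risk F is μ-strongly convex on 𝒳, with minimizer x* ∈ 𝒳. Fix candidate points x_1, …, x_K ∈ 𝒳 (K ≥ 1), draw n i.i.d. samples S_1, …, S_n, and let k̂ ∈ argmin_{k ∈ {1,…,K}} F̄(x_k) (standard model selection). Then for every δ ∈ (0,1), with probability at least 1 − δ: F(x_{k̂}) − F* ≤ 2 · max{ min_{k ∈ {1,…,K}} F(x_k) − F*, (32 L² / (μ n)) · ln(2K/δ) }. -/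
open MeasureTheory ProbabilityTheory

section Aux

lemma my_abs_sinh_lt_cosh (u : ℝ) : |Real.sinh u| < Real.cosh u := by
  have h := Real.cosh_sq u
  have hc := Real.cosh_pos u
  rw [abs_lt]
  constructor <;> nlinarith [Real.sinh_sq u]

lemma my_hoeffding_core {r : ℝ} (hr : |r| ≤ 1) (u : ℝ) :
    Real.cosh u + r * Real.sinh u ≤ Real.exp (r * u + u ^ 2 / 2) := by
  set A : ℝ → ℝ := fun u => Real.cosh u + r * Real.sinh u with hA
  have hApos : ∀ u, 0 < A u := by
    intro u
    have h1 : |r * Real.sinh u| ≤ |Real.sinh u| := by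
      rw [abs_mul]
      nlinarith [abs_nonneg (Real.sinh u)]
    have h2 := my_abs_sinh_lt_cosh u
    simp only [hA]
    nlinarith [abs_le.1 h1, abs_lt.1 h2]
  set φ : ℝ → ℝ := fun u => (Real.sinh u + r * Real.cosh u) / A u with hφ
  have hAderiv : ∀ u, HasDerivAt A (Real.sinh u + r * Real.cosh u) u := by
    intro u
    exact (Real.hasDerivAt_cosh u).add ((Real.hasDerivAt_sinh u).const_mul r)
  have hφderiv : ∀ u, HasDerivAt φ (1 - φ u ^ 2) u := by
    intro u
    have hnum : HasDerivAt (fun u => Real.sinh u + r * Real.cosh u) (A u) u := by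
      have := (Real.hasDerivAt_sinh u).add ((Real.hasDerivAt_cosh u).const_mul r)
      exact this
    have hne := (hApos u).ne'
    have := hnum.div (hAderiv u) hne
    refine this.congr_deriv ?_
    simp only [hφ]
    field_simp
  set h : ℝ → ℝ := fun u => u - φ u + r with hh
  have hhderiv : ∀ u, HasDerivAt h (φ u ^ 2) u := by
    intro u
    have := ((hasDerivAt_id u).sub (hφderiv u)).add_const r
    refine this.congr_deriv ?_; ring
  have hhmono : Monotone h :=
    monotone_of_deriv_nonneg (fun u => (hhderiv u).differentiableAt)
      (fun u => by rw [(hhderiv u).deriv]; positivity)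
  have hh0 : h 0 = 0 := by simp [hh, hφ, hA]
  set g : ℝ → ℝ := fun u => r * u + u ^ 2 / 2 - Real.log (A u) with hg
  have hgderiv : ∀ u, HasDerivAt g (h u) u := by
    intro u
    have hlog : HasDerivAt (fun u => Real.log (A u)) ((Real.sinh u + r * Real.cosh u) / A u) u :=
      (hAderiv u).log (hApos u).ne'
    have h1 : HasDerivAt (fun u => r * u + u ^ 2 / 2) (r + u) u := by
      have := ((hasDerivAt_id u).const_mul r).add
        (((hasDerivAt_id u).pow 2).div_const 2)
      refine this.congr_deriv ?_
      simp [id]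
    have := h1.sub hlog
    refine this.congr_deriv ?_
    simp only [hh, hφ]; ring
  have hgdiff : Differentiable ℝ g := fun u => (hgderiv u).differentiableAt
  have hg0 : g 0 = 0 := by simp [hg, hA]
  have hgnonneg : ∀ u, 0 ≤ g u := by
    intro u
    rcases le_total 0 u with hu | hu
    · have : MonotoneOn g (Set.Ici (0:ℝ)) := by
        apply monotoneOn_of_deriv_nonneg (convex_Ici 0) hgdiff.continuous.continuousOn
          hgdiff.differentiableOn
        intro v hv
        rw [(hgderiv v).deriv]
        rw [interior_Ici] at hv
        have := hhmono (le_of_lt hv)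
        rw [hh0] at this; linarith
      have := this (Set.self_mem_Ici) hu hu
      rwa [hg0] at this
    · have : AntitoneOn g (Set.Iic (0:ℝ)) := by
        apply antitoneOn_of_deriv_nonpos (convex_Iic 0) hgdiff.continuous.continuousOn
          hgdiff.differentiableOn
        intro v hv
        rw [(hgderiv v).deriv]
        rw [interior_Iic] at hv
        have := hhmono (le_of_lt hv)
        rw [hh0] at this; linarith
      have := this hu (Set.self_mem_Iic) hu
      rwa [hg0] at this
  have := hgnonneg u
  have hlog : Real.log (A u) ≤ r * u + u ^ 2 / 2 := by simp only [hg] at this; linarith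
  calc A u = Real.exp (Real.log (A u)) := (Real.exp_log (hApos u)).symm
    _ ≤ Real.exp (r * u + u ^ 2 / 2) := Real.exp_le_exp.2 hlog

lemma my_exp_le_cosh_add {z B t : ℝ} (hB : 0 < B) (hz : |z| ≤ B) :
    Real.exp (t * z) ≤ Real.cosh (t * B) + (z / B) * Real.sinh (t * B) := by
  have hz' := abs_le.1 hz
  set θ : ℝ := (z + B) / (2 * B) with hθ
  have hθ0 : 0 ≤ θ := by
    apply div_nonneg <;> linarith
  have hθ1 : θ ≤ 1 := by
    rw [div_le_one (by linarith)]; linarith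
  have hconv := convexOn_exp.2 (Set.mem_univ (t * B)) (Set.mem_univ (-(t * B)))
    (by linarith : (0:ℝ) ≤ θ) (by linarith : (0:ℝ) ≤ 1 - θ) (by ring)
  simp only [smul_eq_mul] at hconv
  have harg : θ * (t * B) + (1 - θ) * (-(t * B)) = t * z := by
    rw [hθ]; field_simp; ring
  rw [harg] at hconv
  have h1 : Real.exp (t * B) = Real.cosh (t * B) + Real.sinh (t * B) :=
    (Real.cosh_add_sinh (t * B)).symm
  have h2 : Real.exp (-(t * B)) = Real.cosh (t * B) - Real.sinh (t * B) := by
    rw [Real.cosh_sub_sinh]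
  have hzB : (2 * θ - 1) = z / B := by
    rw [hθ]; field_simp; ring
  calc Real.exp (t * z) ≤ θ * Real.exp (t * B) + (1 - θ) * Real.exp (-(t * B)) := hconv
    _ = Real.cosh (t * B) + (2 * θ - 1) * Real.sinh (t * B) := by
        rw [h1, h2]; ring
    _ = _ := by rw [hzB]

lemma my_mgf_le_of_abs_le {Ω : Type*} [MeasureSpace Ω] [IsProbabilityMeasure (ℙ : Measure Ω)]
    {X : Ω → ℝ} (hX : Measurable X) {B : ℝ} (hB : 0 < B)
    (hae : ∀ᵐ ω, |X ω| ≤ B) (t : ℝ) :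
    mgf X ℙ t ≤ Real.exp (t * (∫ ω, X ω) + t ^ 2 * B ^ 2 / 2) := by
  have hXint : Integrable X ℙ := by
    apply MeasureTheory.Integrable.mono' (integrable_const B) hX.aestronglyMeasurable
    filter_upwards [hae] with ω h using by simpa using h
  set m : ℝ := ∫ ω, X ω with hm
  have hmB : |m| ≤ B := by
    have h1 : |m| ≤ ∫ ω, |X ω| ∂ℙ := by
      simpa using MeasureTheory.norm_integral_le_integral_norm (μ := ℙ) X
    have h2 : ∫ ω, |X ω| ∂ℙ ≤ ∫ (_ : Ω), B ∂ℙ :=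
      integral_mono_ae hXint.abs (integrable_const B) hae
    simp only [integral_const, probReal_univ, smul_eq_mul, one_mul] at h2
    linarith
  have hint : Integrable (fun ω => Real.exp (t * X ω)) ℙ := by
    apply MeasureTheory.Integrable.mono' (integrable_const (Real.exp (|t| * B)))
      (hX.const_mul t).exp.aestronglyMeasurable
    filter_upwards [hae] with ω h
    rw [Real.norm_eq_abs, Real.abs_exp, Real.exp_le_exp]
    calc t * X ω ≤ |t * X ω| := le_abs_self _
      _ = |t| * |X ω| := abs_mul _ _
      _ ≤ |t| * B := by nlinarith [abs_nonneg t]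
  have hptw : ∀ᵐ ω, Real.exp (t * X ω) ≤ Real.cosh (t * B) + (X ω / B) * Real.sinh (t * B) := by
    filter_upwards [hae] with ω h using my_exp_le_cosh_add hB h
  have hintR : Integrable (fun ω => Real.cosh (t * B) + (X ω / B) * Real.sinh (t * B)) ℙ := by
    apply Integrable.add (integrable_const _)
    exact ((hXint.div_const B).mul_const _)
  calc mgf X ℙ t = ∫ ω, Real.exp (t * X ω) := rfl
    _ ≤ ∫ ω, (Real.cosh (t * B) + (X ω / B) * Real.sinh (t * B)) :=
        integral_mono_ae hint hintR hptw
    _ = Real.cosh (t * B) + (m / B) * Real.sinh (t * B) := by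
        rw [integral_add (integrable_const _) ((hXint.div_const B).mul_const _)]
        rw [integral_const]
        simp only [probReal_univ, smul_eq_mul, one_mul]
        congr 1
        rw [integral_mul_const, integral_div]
    _ ≤ Real.exp ((m / B) * (t * B) + (t * B) ^ 2 / 2) := by
        apply my_hoeffding_core
        rw [abs_div, abs_of_pos hB, div_le_one hB]
        exact hmB
    _ = Real.exp (t * m + t ^ 2 * B ^ 2 / 2) := by
        congr 1
        field_simp

lemma my_hoeffding_tail {Ω : Type*} [MeasureSpace Ω] [IsProbabilityMeasure (ℙ : Measure Ω)]
    {n : ℕ} {X : Fin n → Ω → ℝ} (hmeas : ∀ i, Measurable (X i))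
    (hindep : iIndepFun X ℙ)
    {B m : ℝ} (hB : 0 < B) (hae : ∀ i, ∀ᵐ ω, |X i ω| ≤ B)
    (hmean : ∀ i, (∫ ω, X i ω) = m) {t : ℝ} (ht : 0 ≤ t) :
    (ℙ {ω | n * (m + t) ≤ ∑ i, X i ω}).toReal ≤ Real.exp (-(n * t ^ 2) / (2 * B ^ 2)) := by
  set lam : ℝ := t / B ^ 2 with hlam
  have hlam0 : 0 ≤ lam := by positivity
  have hint : ∀ i : Fin n, Integrable (fun ω => Real.exp (lam * X i ω)) ℙ := by
    intro i
    apply MeasureTheory.Integrable.mono' (integrable_const (Real.exp (lam * B)))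
      ((hmeas i).const_mul lam).exp.aestronglyMeasurable
    filter_upwards [hae i] with ω h
    rw [Real.norm_eq_abs, Real.abs_exp, Real.exp_le_exp]
    have := abs_le.1 h
    nlinarith
  have hintsum : Integrable (fun ω => Real.exp (lam * (∑ i, X i) ω)) ℙ :=
    hindep.integrable_exp_mul_sum hmeas (fun i _ => hint i)
  have hchern := measure_ge_le_exp_mul_mgf (X := ∑ i, X i) (μ := ℙ)
    (n * (m + t)) hlam0 hintsum
  have hmgf : mgf (∑ i, X i) ℙ lam ≤ Real.exp (n * (lam * m + lam ^ 2 * B ^ 2 / 2)) := by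
    rw [hindep.mgf_sum hmeas]
    calc ∏ i, mgf (X i) ℙ lam
        ≤ ∏ _i : Fin n, Real.exp (lam * m + lam ^ 2 * B ^ 2 / 2) := by
          apply Finset.prod_le_prod
          · intro i _; exact mgf_nonneg
          · intro i _
            have := my_mgf_le_of_abs_le (hmeas i) hB (hae i) lam
            rwa [hmean i] at this
      _ = Real.exp (n * (lam * m + lam ^ 2 * B ^ 2 / 2)) := by
          rw [Finset.prod_const, ← Real.exp_nat_mul]
          simp
  have hset : {ω | (n : ℝ) * (m + t) ≤ (∑ i, X i) ω} = {ω | (n : ℝ) * (m + t) ≤ ∑ i, X i ω} := by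
    ext ω; simp [Finset.sum_apply]
  calc (ℙ {ω | (n:ℝ) * (m + t) ≤ ∑ i, X i ω}).toReal
      = (ℙ {ω | (n:ℝ) * (m + t) ≤ (∑ i, X i) ω}).toReal := by rw [hset]
    _ ≤ Real.exp (-lam * (n * (m + t))) * mgf (∑ i, X i) ℙ lam := hchern
    _ ≤ Real.exp (-lam * (n * (m + t))) * Real.exp (n * (lam * m + lam ^ 2 * B ^ 2 / 2)) := by
        apply mul_le_mul_of_nonneg_left hmgf (le_of_lt (Real.exp_pos _))
    _ = Real.exp (n * (-lam * t + lam ^ 2 * B ^ 2 / 2)) := by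
        rw [← Real.exp_add]; congr 1; ring
    _ = Real.exp (-(n * t ^ 2) / (2 * B ^ 2)) := by
        congr 1
        have hBne : B ≠ 0 := ne_of_gt hB
        rw [hlam]
        field_simp
        ring

lemma my_quad_growth {E : Type*} [NormedAddCommGroup E] [NormedSpace ℝ E]
    (𝒳 : Set E) (hconvset : Convex ℝ 𝒳) (F : E → ℝ) {μc : ℝ} (hμc : 0 < μc)
    (F' : E → E →L[ℝ] ℝ)
    (hSC : ∀ u ∈ 𝒳, ∀ v ∈ 𝒳, F v + F' v (u - v) + μc / 2 * ‖u - v‖ ^ 2 ≤ F u)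
    {xstar : E} (hxstarmem : xstar ∈ 𝒳) (hxstarmin : ∀ x ∈ 𝒳, F xstar ≤ F x)
    {u : E} (hu : u ∈ 𝒳) :
    μc / 2 * ‖u - xstar‖ ^ 2 ≤ F u - F xstar := by
  set w : E := u - xstar with hw
  have key : ∀ t : ℝ, 0 < t → t ≤ 1 → μc * (1 - t) / 2 * ‖w‖ ^ 2 ≤ F u - F xstar := by
    intro t ht0 ht1
    set v : E := xstar + t • w with hv
    have hvmem : v ∈ 𝒳 := by
      have := hconvset hxstarmem hu (by linarith : (0:ℝ) ≤ 1 - t) (le_of_lt ht0) (by ring)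
      convert this using 1
      rw [hv, hw]
      module
    have hvmin : F xstar ≤ F v := hxstarmin v hvmem
    have h1 := hSC xstar hxstarmem v hvmem
    have hxv : xstar - v = (-t) • w := by rw [hv]; module
    rw [hxv, ContinuousLinearMap.map_smul, smul_eq_mul] at h1
    have hnxv : ‖(-t) • w‖ ^ 2 = t ^ 2 * ‖w‖ ^ 2 := by
      rw [norm_smul, Real.norm_eq_abs, abs_neg, abs_of_pos ht0, mul_pow]
    rw [hnxv] at h1
    have hstep1 : μc * t / 2 * ‖w‖ ^ 2 ≤ F' v w := by
      have h2 : (-t) * F' v w + μc / 2 * (t ^ 2 * ‖w‖ ^ 2) ≤ 0 := by linarith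
      nlinarith [h2, ht0]
    have h3 := hSC u hu v hvmem
    have huv : u - v = (1 - t) • w := by rw [hv, hw]; module
    rw [huv, ContinuousLinearMap.map_smul, smul_eq_mul] at h3
    rw [show ‖(1 - t) • w‖ ^ 2 = (1 - t) ^ 2 * ‖w‖ ^ 2 from by
      rw [norm_smul, Real.norm_eq_abs, abs_of_nonneg (by linarith : (0:ℝ) ≤ 1 - t), mul_pow]] at h3
    have hFw : (1 - t) * (μc * t / 2 * ‖w‖ ^ 2) ≤ (1 - t) * F' v w :=
      mul_le_mul_of_nonneg_left hstep1 (by linarith)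
    nlinarith [hvmin]
  apply le_of_forall_pos_le_add
  intro ε hε
  rcases eq_or_lt_of_le (norm_nonneg w) with hw0 | hw0
  · have := hxstarmin u hu
    rw [← hw0]
    simpa using by linarith
  · set t : ℝ := min 1 (2 * ε / (μc * ‖w‖ ^ 2)) with htdef
    have ht0 : 0 < t := by
      apply lt_min one_pos
      positivity
    have ht1 : t ≤ 1 := min_le_left _ _
    have := key t ht0 ht1
    have htε : μc * t / 2 * ‖w‖ ^ 2 ≤ ε := by
      have h4 : t ≤ 2 * ε / (μc * ‖w‖ ^ 2) := min_le_right _ _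
      have h5 : t * (μc * ‖w‖ ^ 2) ≤ 2 * ε := by
        rw [← le_div_iff₀ (by positivity)]
        exact h4
      nlinarith
    nlinarith

lemma my_select_arith {D Δs ε M : ℝ} (hΔs : 0 ≤ Δs) (hε : 0 < ε) (hD : 0 ≤ D)
    (hM : M = max Δs (8 * ε))
    (hchain : D ≤ Δs + Real.sqrt (Δs * ε) + Real.sqrt (D * ε)) :
    D ≤ 2 * M := by
  by_contra hcon
  push_neg at hcon
  have hΔsM : Δs ≤ M := hM ▸ le_max_left _ _
  have hεM : 8 * ε ≤ M := hM ▸ le_max_right _ _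
  have hM0 : 0 < M := by linarith
  set s1 := Real.sqrt (Δs * ε) with hs1
  set s2 := Real.sqrt (D * ε) with hs2
  have hs1nn : 0 ≤ s1 := Real.sqrt_nonneg _
  have hs2nn : 0 ≤ s2 := Real.sqrt_nonneg _
  have hs1sq : s1 ^ 2 = Δs * ε := Real.sq_sqrt (by positivity)
  have hs2sq : s2 ^ 2 = D * ε := Real.sq_sqrt (by positivity)
  nlinarith [sq_nonneg (s2 - M), sq_nonneg (s1 - M / 4), sq_nonneg (s1 + s2 - M), mul_pos hM0 hM0]

end Aux

set_option maxHeartbeats 1000000 in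
/-- Guarantee for standard model selection under strong convexity
(Proposition 2.1). `𝒳 ⊆ E` is a closed convex set in a (finite-dimensional) normed
space, `f` is `L`-Lipschitz, the population risk `F` is `μc`-strongly convex on `𝒳`
(with gradient/subgradient map `F'`), `x* ∈ 𝒳` is the minimizer of `F` over `𝒳`,
`x 1, …, x K` are candidate models, and `k̂` minimizes the empirical validation
error `F̄`. Then with probability at least `1 - δ`,
`F(x k̂) - F* ≤ 2 max{min_k F(x k) - F*, (32 L²/(μc n)) ln(2K/δ)}`. -/
theorem stmt0
    {E : Type*} [NormedAddCommGroup E] [NormedSpace ℝ E] [FiniteDimensional ℝ E]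
    {𝒮 : Type*} [MeasurableSpace 𝒮] (μsamp : Measure 𝒮) [IsProbabilityMeasure μsamp]
    {Ω : Type*} [MeasureSpace Ω] [IsProbabilityMeasure (ℙ : Measure Ω)]
    (𝒳 : Set E) (hclosed : IsClosed 𝒳) (hconvset : Convex ℝ 𝒳)
    (f : E → 𝒮 → ℝ)
    (hfmeas : ∀ x, Measurable (f x))
    (hfconv : ∀ᵐ s ∂μsamp, ConvexOn ℝ 𝒳 fun x => f x s)
    (hfint : ∀ x ∈ 𝒳, Integrable (f x) μsamp)
    (L : ℝ) (hL : 0 < L)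
    (hLip : ∀ᵐ s ∂μsamp, ∀ x ∈ 𝒳, ∀ x' ∈ 𝒳, |f x s - f x' s| ≤ L * ‖x - x'‖)
    (n : ℕ) (hn : 0 < n)
    (S : Fin n → Ω → 𝒮)
    (hSmeas : ∀ i, Measurable (S i))
    (hSlaw : ∀ i, Measure.map (S i) ℙ = μsamp)
    (hSindep : iIndepFun S ℙ)
    (F : E → ℝ) (hF : ∀ x, F x = ∫ s, f x s ∂μsamp)
    (Fbar : Ω → E → ℝ) (hFbar : ∀ ω x, Fbar ω x = (∑ i, f x (S i ω)) / n)
    (μc : ℝ) (hμc : 0 < μc)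
    (F' : E → E →L[ℝ] ℝ)
    (hSC : ∀ u ∈ 𝒳, ∀ v ∈ 𝒳, F v + F' v (u - v) + μc / 2 * ‖u - v‖ ^ 2 ≤ F u)
    (xstar : E) (hxstarmem : xstar ∈ 𝒳) (hxstarmin : ∀ x ∈ 𝒳, F xstar ≤ F x)
    (K : ℕ) (hK : 0 < K)
    (x : Fin K → E) (hxmem : ∀ k, x k ∈ 𝒳)
    (khat : Ω → Fin K) (hkhatmeas : Measurable khat)
    (hkhat : ∀ ω k, Fbar ω (x (khat ω)) ≤ Fbar ω (x k))
    (δ : ℝ) (hδ : δ ∈ Set.Ioo (0 : ℝ) 1) :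
    ENNReal.ofReal (1 - δ) ≤
      ℙ {ω | F (x (khat ω)) - F xstar ≤
        2 * max ((⨅ k, F (x k)) - F xstar)
          (32 * L ^ 2 / (μc * n) * Real.log (2 * K / δ))} := by
  obtain ⟨hδ0, hδ1⟩ := hδ
  have hn0 : (0:ℝ) < n := by exact_mod_cast hn
  have hK0 : (0:ℝ) < K := by exact_mod_cast hK
  have hK1 : (1:ℝ) ≤ K := by exact_mod_cast hK
  -- constants
  set lnT : ℝ := Real.log (2 * K / δ) with hlnT
  have hln : 0 < lnT := by
    apply Real.log_pos
    rw [lt_div_iff₀ hδ0]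
    linarith
  set ε : ℝ := 4 * L ^ 2 / (μc * n) * lnT with hεdef
  have hε : 0 < ε := by positivity
  -- per-candidate quantities
  set Δ : Fin K → ℝ := fun k => F (x k) - F xstar with hΔdef
  set g : Fin K → 𝒮 → ℝ := fun k s => f (x k) s - f xstar s with hgdef
  set Avg : Fin K → Ω → ℝ := fun k ω => (∑ i, g k (S i ω)) / n with hAvgdef
  set sk : Fin K → ℝ := fun k => Real.sqrt (Δ k * ε) with hskdef
  have hΔ0 : ∀ k, 0 ≤ Δ k := fun k => sub_nonneg.2 (hxstarmin _ (hxmem k))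
  have hsk0 : ∀ k, 0 ≤ sk k := fun k => Real.sqrt_nonneg _
  have hQG : ∀ k, μc / 2 * ‖x k - xstar‖ ^ 2 ≤ Δ k := fun k =>
    my_quad_growth 𝒳 hconvset F hμc F' hSC hxstarmem hxstarmin (hxmem k)
  have hgmeas : ∀ k, Measurable (g k) := fun k => (hfmeas (x k)).sub (hfmeas xstar)
  have hgint : ∀ k, ∫ s, g k s ∂μsamp = Δ k := by
    intro k
    have hΔk : Δ k = F (x k) - F xstar := rfl
    rw [hΔk, hF (x k), hF xstar]
    exact integral_sub (hfint (x k) (hxmem k)) (hfint xstar hxstarmem)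
  have hAvgFbar : ∀ k ω, Avg k ω = Fbar ω (x k) - Fbar ω xstar := by
    intro k ω
    rw [hFbar, hFbar]
    simp only [hAvgdef, hgdef]
    rw [← sub_div, ← Finset.sum_sub_distrib]
  -- bad events
  set bad : Fin K → Set Ω := fun k => {ω | sk k < |Avg k ω - Δ k|} with hbaddef
  have hbadk : ∀ k, ℙ (bad k) ≤ ENNReal.ofReal (δ / K) := by
    intro k
    rcases eq_or_lt_of_le (norm_nonneg (x k - xstar)) with hw0 | hw0
    · -- x k = xstar : bad k is empty
      have hxk : x k = xstar := by
        have := (norm_eq_zero.1 hw0.symm)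
        exact sub_eq_zero.1 this
      have hbadempty : bad k = ∅ := by
        ext ω
        simp only [hbaddef, Set.mem_setOf_eq, Set.mem_empty_iff_false, iff_false, not_lt]
        have hg0 : ∀ s, g k s = 0 := by intro s; simp [hgdef, hxk]
        have hΔk : Δ k = 0 := by simp [hΔdef, hxk]
        have : Avg k ω = 0 := by
          simp only [hAvgdef]
          rw [Finset.sum_congr rfl (fun i _ => hg0 (S i ω))]
          simp
        rw [this, hΔk]
        simpa using hsk0 k
      rw [hbadempty]
      simp
    · -- x k ≠ xstar
      set B : ℝ := L * ‖x k - xstar‖ with hBdef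
      have hB : 0 < B := by positivity
      have hΔpos : 0 < Δ k := lt_of_lt_of_le (by positivity) (hQG k)
      set Y : Fin n → Ω → ℝ := fun i ω => g k (S i ω) with hYdef
      have hYmeas : ∀ i, Measurable (Y i) := fun i => (hgmeas k).comp (hSmeas i)
      have hYindep : iIndepFun Y ℙ :=
        hSindep.comp (fun _ => g k) (fun _ => hgmeas k)
      have hgbound : ∀ᵐ s ∂μsamp, |g k s| ≤ B := by
        filter_upwards [hLip] with s h using h (x k) (hxmem k) xstar hxstarmem
      have hYae : ∀ i, ∀ᵐ ω, |Y i ω| ≤ B := by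
        intro i
        have h2 : ∀ᵐ s ∂(Measure.map (S i) ℙ), |g k s| ≤ B := by
          rw [hSlaw i]; exact hgbound
        exact ae_of_ae_map (hSmeas i).aemeasurable h2
      have hYmean : ∀ i, (∫ ω, Y i ω) = Δ k := by
        intro i
        have h := integral_map (φ := S i) (hSmeas i).aemeasurable
          (f := g k) (by rw [hSlaw i]; exact (hgmeas k).aestronglyMeasurable)
        rw [hSlaw i] at h
        have h2 : (∫ ω, Y i ω) = ∫ ω, g k (S i ω) ∂ℙ := rfl
        rw [h2, ← h, hgint k]
      have hYnmean : ∀ i, (∫ ω, -(Y i ω)) = -(Δ k) := by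
        intro i
        rw [integral_neg, hYmean i]
      have hYnmeas : ∀ i, Measurable (fun ω => -(Y i ω)) := fun i => (hYmeas i).neg
      have hYnindep : iIndepFun (fun i ω => -(Y i ω)) ℙ :=
        hSindep.comp (fun _ s => -(g k s)) (fun _ => (hgmeas k).neg)
      have hYnae : ∀ i, ∀ᵐ ω, |(-(Y i ω))| ≤ B := by
        intro i
        filter_upwards [hYae i] with ω h using by rwa [abs_neg]
      -- exponent bound
      have hBΔ : B ^ 2 ≤ 2 * L ^ 2 / μc * Δ k := by
        have h2 := mul_le_mul_of_nonneg_left (hQG k)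
          (by positivity : (0:ℝ) ≤ 2 * L ^ 2 / μc)
        calc B ^ 2 = L ^ 2 * ‖x k - xstar‖ ^ 2 := by rw [hBdef]; ring
          _ = 2 * L ^ 2 / μc * (μc / 2 * ‖x k - xstar‖ ^ 2) := by
              field_simp
          _ ≤ 2 * L ^ 2 / μc * Δ k := h2
      have hexp : Real.exp (-(n * (sk k) ^ 2) / (2 * B ^ 2)) ≤ δ / (2 * K) := by
        have hsksq : (sk k) ^ 2 = Δ k * ε := Real.sq_sqrt (by positivity)
        have hgoal : lnT ≤ n * (sk k) ^ 2 / (2 * B ^ 2) := by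
          rw [hsksq]
          have h1 : n * (Δ k * ε) / (2 * B ^ 2) ≥ n * (Δ k * ε) / (2 * (2 * L ^ 2 / μc * Δ k)) := by
            apply div_le_div_of_nonneg_left (by positivity) (by positivity)
            nlinarith
          have h2 : n * (Δ k * ε) / (2 * (2 * L ^ 2 / μc * Δ k)) = lnT := by
            have hμne : μc ≠ 0 := ne_of_gt hμc
            have hnne : (n:ℝ) ≠ 0 := ne_of_gt hn0
            have hLne : L ≠ 0 := ne_of_gt hL
            have hΔne : Δ k ≠ 0 := ne_of_gt hΔpos
            rw [hεdef]
            field_simp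
            ring
          linarith
        calc Real.exp (-(n * (sk k) ^ 2) / (2 * B ^ 2))
            = Real.exp (-(n * (sk k) ^ 2 / (2 * B ^ 2))) := by rw [neg_div]
          _ ≤ Real.exp (-lnT) := by
              apply Real.exp_le_exp.2
              linarith
          _ = δ / (2 * K) := by
              rw [hlnT, Real.exp_neg, Real.exp_log (by positivity)]
              rw [inv_div]
      have hup := my_hoeffding_tail hYmeas hYindep hB hYae hYmean (hsk0 k)
      have hlo := my_hoeffding_tail hYnmeas hYnindep hB hYnae hYnmean (hsk0 k)
      have hsub : bad k ⊆ {ω | (n:ℝ) * (Δ k + sk k) ≤ ∑ i, Y i ω}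
          ∪ {ω | (n:ℝ) * (-(Δ k) + sk k) ≤ ∑ i, -(Y i ω)} := by
        intro ω hω
        simp only [hbaddef, Set.mem_setOf_eq] at hω
        have hsum : ∑ i, Y i ω = n * Avg k ω := by
          have : Avg k ω = (∑ i, Y i ω) / n := rfl
          rw [this]
          field_simp
        rcases lt_abs.1 hω with h | h
        · left
          simp only [Set.mem_setOf_eq, hsum]
          nlinarith
        · right
          simp only [Set.mem_setOf_eq, Finset.sum_neg_distrib, hsum]
          nlinarith
      calc ℙ (bad k) ≤ ℙ ({ω | (n:ℝ) * (Δ k + sk k) ≤ ∑ i, Y i ω}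
            ∪ {ω | (n:ℝ) * (-(Δ k) + sk k) ≤ ∑ i, -(Y i ω)}) := measure_mono hsub
        _ ≤ ℙ {ω | (n:ℝ) * (Δ k + sk k) ≤ ∑ i, Y i ω}
            + ℙ {ω | (n:ℝ) * (-(Δ k) + sk k) ≤ ∑ i, -(Y i ω)} := measure_union_le _ _
        _ ≤ ENNReal.ofReal (δ / (2 * K)) + ENNReal.ofReal (δ / (2 * K)) := by
            gcongr
            · exact (ENNReal.le_ofReal_iff_toReal_le (measure_ne_top _ _)
                (by positivity)).2 (hup.trans hexp)
            · exact (ENNReal.le_ofReal_iff_toReal_le (measure_ne_top _ _)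
                (by positivity)).2 (hlo.trans hexp)
        _ = ENNReal.ofReal (δ / K) := by
            rw [← ENNReal.ofReal_add (by positivity) (by positivity)]
            congr 1
            field_simp
            ring
  -- union bound
  have hunion : ℙ (⋃ k, bad k) ≤ ENNReal.ofReal δ := by
    calc ℙ (⋃ k, bad k) ≤ ∑' k, ℙ (bad k) := measure_iUnion_le _
      _ = ∑ k, ℙ (bad k) := tsum_fintype _
      _ ≤ ∑ _k : Fin K, ENNReal.ofReal (δ / K) := Finset.sum_le_sum (fun k _ => hbadk k)
      _ = K * ENNReal.ofReal (δ / K) := by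
          rw [Finset.sum_const, Finset.card_univ, Fintype.card_fin, nsmul_eq_mul]
      _ = ENNReal.ofReal δ := by
          rw [← ENNReal.ofReal_natCast K, ← ENNReal.ofReal_mul (by positivity)]
          congr 1
          field_simp
  -- good event implies target
  set T : Set Ω := {ω | F (x (khat ω)) - F xstar ≤
      2 * max ((⨅ k, F (x k)) - F xstar) (32 * L ^ 2 / (μc * n) * lnT)}
      with hTdef
  have hgoodT : (⋃ k, bad k)ᶜ ⊆ T := by
    intro ω hω
    have hgood : ∀ k, |Avg k ω - Δ k| ≤ sk k := by
      intro k
      by_contra hcon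
      push_neg at hcon
      exact hω (Set.mem_iUnion.2 ⟨k, hcon⟩)
    haveI : Nonempty (Fin K) := ⟨⟨0, hK⟩⟩
    obtain ⟨kst, _, hkst⟩ := Finset.exists_min_image Finset.univ Δ
      ⟨⟨0, hK⟩, Finset.mem_univ _⟩
    have hiInf : (⨅ k, F (x k)) = F (x kst) := by
      apply le_antisymm
      · exact ciInf_le (Set.Finite.bddBelow (Set.finite_range _)) kst
      · apply le_ciInf
        intro k
        have := hkst k (Finset.mem_univ k)
        simp only [hΔdef] at this
        linarith
    -- the chain
    have hchain : Δ (khat ω) ≤ Δ kst + sk kst + sk (khat ω) := by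
      have h1 : Δ (khat ω) ≤ Avg (khat ω) ω + sk (khat ω) := by
        have := (abs_le.1 (hgood (khat ω))).1
        linarith
      have h2 : Avg (khat ω) ω ≤ Avg kst ω := by
        rw [hAvgFbar, hAvgFbar]
        have := hkhat ω kst
        linarith
      have h3 : Avg kst ω ≤ Δ kst + sk kst := by
        have := (abs_le.1 (hgood kst)).2
        linarith
      linarith
    have harith : Δ (khat ω) ≤ 2 * max (Δ kst) (8 * ε) :=
      my_select_arith (hΔ0 kst) hε (hΔ0 (khat ω)) rfl hchain
    simp only [hTdef, Set.mem_setOf_eq]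
    have h8ε : 32 * L ^ 2 / (μc * (n:ℝ)) * lnT = 8 * ε := by
      rw [hεdef]
      ring
    rw [hiInf, h8ε]
    exact harith
  -- conclude
  have hTc : Tᶜ ⊆ ⋃ k, bad k := Set.compl_subset_comm.mp hgoodT
  have hTcle : ℙ Tᶜ ≤ ENNReal.ofReal δ := le_trans (measure_mono hTc) hunion
  have hone : (1:ENNReal) ≤ ℙ T + ENNReal.ofReal δ := by
    calc (1:ENNReal) = ℙ (Set.univ : Set Ω) := (measure_univ).symm
      _ = ℙ (T ∪ Tᶜ) := by rw [Set.union_compl_self]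
      _ ≤ ℙ T + ℙ Tᶜ := measure_union_le _ _
      _ ≤ ℙ T + ENNReal.ofReal δ := by gcongr
  calc ENNReal.ofReal (1 - δ) = 1 - ENNReal.ofReal δ := by
        rw [ENNReal.ofReal_sub _ (le_of_lt hδ0), ENNReal.ofReal_one]
    _ ≤ ℙ T := by
        rw [tsub_le_iff_right]
        exact hone
end

section
/- Suppose the confidence widths τ_0 = 0, τ_1, …, τ_K satisfy the confidence-width condition with failure probability δ ∈ (0,1). Then with probability at least 1 − δ, the reliable model selection output satisfies F(x_{k̂_rely}) ≤ F(x_k) + (1 + γ) τ_k simultaneously for all k ∈ {0, 1, …, K}. -/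
open MeasureTheory ProbabilityTheory

/-- Key guarantee for reliable model selection (Lemma 2.3).
Candidates `x 0 = 0, x 1, …, x K` in a closed convex set `𝒳 ∋ 0`, nonnegative
(sample-dependent) confidence widths `τ` with `τ 0 = 0`, threshold
`θ ω = min_k (F̄ ω (x k) + γ τ ω k)`, safe set `ℱ ω = {k | F̄ ω (x k) + τ ω k ≤ θ ω}`,
and `k̂_rely ω ∈ argmin_{k ∈ ℱ ω} F̄ ω (x k)`.  If the confidence-width condition
`P(∃ k, |F(x k) - F̄(x k) - (F 0 - F̄ 0)| > τ k) ≤ δ` holds, then with probability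
at least `1 - δ`, `F (x k̂_rely) ≤ F (x k) + (1 + γ) τ k` for all `k`. -/
theorem stmt1
    {E : Type*} [NormedAddCommGroup E] [NormedSpace ℝ E] [FiniteDimensional ℝ E]
    {𝒮 : Type*} [MeasurableSpace 𝒮] (μsamp : Measure 𝒮) [IsProbabilityMeasure μsamp]
    {Ω : Type*} [MeasureSpace Ω] [IsProbabilityMeasure (ℙ : Measure Ω)]
    (𝒳 : Set E) (hclosed : IsClosed 𝒳) (hconvset : Convex ℝ 𝒳) (h0mem : (0 : E) ∈ 𝒳)
    (f : E → 𝒮 → ℝ)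
    (hfmeas : ∀ x, Measurable (f x))
    (hfconv : ∀ᵐ s ∂μsamp, ConvexOn ℝ 𝒳 fun x => f x s)
    (hfint : ∀ x ∈ 𝒳, Integrable (f x) μsamp)
    (n : ℕ) (hn : 0 < n)
    (S : Fin n → Ω → 𝒮)
    (hSmeas : ∀ i, Measurable (S i))
    (hSlaw : ∀ i, Measure.map (S i) ℙ = μsamp)
    (hSindep : iIndepFun S ℙ)
    (F : E → ℝ) (hF : ∀ x, F x = ∫ s, f x s ∂μsamp)
    (Fbar : Ω → E → ℝ) (hFbar : ∀ ω x, Fbar ω x = (∑ i, f x (S i ω)) / n)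
    (K : ℕ) (x : Fin (K + 1) → E) (hx0 : x 0 = 0) (hxmem : ∀ k, x k ∈ 𝒳)
    (τ : Ω → Fin (K + 1) → ℝ) (hτ0 : ∀ ω, τ ω 0 = 0) (hτnonneg : ∀ ω k, 0 ≤ τ ω k)
    (γ : ℝ) (hγ : 1 ≤ γ)
    (θ : Ω → ℝ) (hθ : ∀ ω, θ ω = ⨅ k, (Fbar ω (x k) + γ * τ ω k))
    (krely : Ω → Fin (K + 1)) (hkrelymeas : Measurable krely)
    (hkrelymem : ∀ ω, Fbar ω (x (krely ω)) + τ ω (krely ω) ≤ θ ω)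
    (hkrelymin : ∀ ω k, Fbar ω (x k) + τ ω k ≤ θ ω → Fbar ω (x (krely ω)) ≤ Fbar ω (x k))
    (δ : ℝ) (hδ : δ ∈ Set.Ioo (0 : ℝ) 1)
    (hconf : ℙ {ω | ∃ k, τ ω k < |F (x k) - Fbar ω (x k) - (F 0 - Fbar ω 0)|}
      ≤ ENNReal.ofReal δ) :
    ENNReal.ofReal (1 - δ) ≤
      ℙ {ω | ∀ k, F (x (krely ω)) ≤ F (x k) + (1 + γ) * τ ω k} := by
  have hsub : {ω | ∃ k, τ ω k < |F (x k) - Fbar ω (x k) - (F 0 - Fbar ω 0)|}ᶜ ⊆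
      {ω | ∀ k, F (x (krely ω)) ≤ F (x k) + (1 + γ) * τ ω k} := by
    intro ω hω k
    simp only [Set.mem_compl_iff, Set.mem_setOf_eq, not_exists, not_lt] at hω
    have h1 := (abs_le.mp (hω (krely ω))).2
    have h3 := (abs_le.mp (hω k)).1
    have h2 : θ ω ≤ Fbar ω (x k) + γ * τ ω k := by
      rw [hθ]; exact ciInf_le (Set.Finite.bddBelow (Set.finite_range _)) k
    have h4 := hkrelymem ω
    linarith
  refine le_trans ?_ (measure_mono hsub)
  by_contra h
  push_neg at h
  set B := {ω | ∃ k, τ ω k < |F (x k) - Fbar ω (x k) - (F 0 - Fbar ω 0)|}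
  have hu : (1 : ENNReal) ≤ ℙ B + ℙ Bᶜ := by
    calc (1 : ENNReal) = ℙ (B ∪ Bᶜ) := by rw [Set.union_compl_self, measure_univ]
      _ ≤ ℙ B + ℙ Bᶜ := measure_union_le _ _
  have hlt : ℙ B + ℙ Bᶜ < 1 := by
    calc ℙ B + ℙ Bᶜ < ENNReal.ofReal δ + ENNReal.ofReal (1 - δ) :=
          ENNReal.add_lt_add_of_le_of_lt (measure_ne_top _ _) hconf h
      _ = 1 := by
          rw [← ENNReal.ofReal_add hδ.1.le (by linarith [hδ.2.le] : (0:ℝ) ≤ 1 - δ)]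
          norm_num
  exact absurd hu (not_le.mpr hlt)
end

section
/- Suppose f is L-Lipschitz, L̂ ≥ L, n ≥ 2, K ≥ 1, δ ∈ (0,1), γ ≥ 3, and that in addition F is μ-strongly convex with minimizer x* ∈ 𝒳. With c̃ := ln(4K/δ) and the empirical-Bernstein confidence widths τ_k, with probability at least 1 − 2δ, the reliable model selection output satisfies F(x_{k̂_rely}) − F* ≤ 4 ( min_{k ∈ {0,…,K}} F(x_k) − F* ) + (128/μ) ( 2L √(2c̃/(n−1)) + (14/3) · L̂ c̃ / (n−1) )². -/
open MeasureTheory ProbabilityTheory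

/-- Minkowski-type inequality for finite sums of squares. -/
lemma aux_sqrt_sum_sq_add_le {n : ℕ} (a b : Fin n → ℝ) :
    Real.sqrt (∑ i, (a i + b i) ^ 2) ≤
      Real.sqrt (∑ i, (a i) ^ 2) + Real.sqrt (∑ i, (b i) ^ 2) := by
  have hA : (0:ℝ) ≤ ∑ i, (a i)^2 := Finset.sum_nonneg fun i _ => sq_nonneg _
  have hB : (0:ℝ) ≤ ∑ i, (b i)^2 := Finset.sum_nonneg fun i _ => sq_nonneg _
  have hcs : (∑ i, a i * b i) ≤ Real.sqrt (∑ i, (a i)^2) * Real.sqrt (∑ i, (b i)^2) := by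
    have h1 : (∑ i, a i * b i)^2 ≤ (∑ i, (a i)^2) * (∑ i, (b i)^2) :=
      Finset.sum_mul_sq_le_sq_mul_sq _ _ _
    have h2 : (∑ i, a i * b i) ≤ |∑ i, a i * b i| := le_abs_self _
    refine h2.trans ?_
    rw [← Real.sqrt_sq_eq_abs, ← Real.sqrt_mul hA]
    exact Real.sqrt_le_sqrt h1
  have hexp : (∑ i, (a i + b i)^2) = ((∑ i, (a i)^2) + (∑ i, (b i)^2)) + 2 * (∑ i, a i * b i) := by
    rw [Finset.mul_sum, ← Finset.sum_add_distrib, ← Finset.sum_add_distrib]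
    exact Finset.sum_congr rfl fun i _ => by ring
  rw [hexp]
  have key : ((∑ i, (a i)^2) + (∑ i, (b i)^2)) + 2 * (∑ i, a i * b i) ≤
      (Real.sqrt (∑ i, (a i)^2) + Real.sqrt (∑ i, (b i)^2))^2 := by
    have e1 : Real.sqrt (∑ i, (a i)^2) ^ 2 = ∑ i, (a i)^2 := Real.sq_sqrt hA
    have e2 : Real.sqrt (∑ i, (b i)^2) ^ 2 = ∑ i, (b i)^2 := Real.sq_sqrt hB
    nlinarith [hcs]
  calc Real.sqrt (((∑ i, (a i)^2) + (∑ i, (b i)^2)) + 2 * (∑ i, a i * b i))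
      ≤ Real.sqrt ((Real.sqrt (∑ i, (a i)^2) + Real.sqrt (∑ i, (b i)^2))^2) :=
        Real.sqrt_le_sqrt key
    _ = _ := Real.sqrt_sq (by positivity)

/-- Sub-Gaussian mgf bound for a centered bounded random variable. -/
lemma aux_mgf_le {α : Type*} [MeasurableSpace α] (ν : Measure α) [IsProbabilityMeasure ν]
    {Y : α → ℝ} (hY : Measurable Y) {B : ℝ} (hB : 0 ≤ B)
    (hbdd : ∀ᵐ a ∂ν, |Y a| ≤ B) (hmean : ∫ a, Y a ∂ν = 0) (t : ℝ) :
    mgf Y ν t ≤ Real.exp (t ^ 2 * B ^ 2 / 2) := by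
  have hYint : Integrable Y ν :=
    (integrable_const B).mono' hY.aestronglyMeasurable
      (hbdd.mono fun a ha => by simpa [Real.norm_eq_abs] using ha)
  rcases eq_or_lt_of_le hB with hB0 | hBpos
  · -- B = 0 : Y = 0 a.e.
    have hY0 : ∀ᵐ a ∂ν, Y a = 0 := hbdd.mono fun a ha => by
      have : |Y a| ≤ 0 := hB0.symm ▸ ha
      exact abs_eq_zero.mp (le_antisymm this (abs_nonneg _))
    have : mgf Y ν t = ∫ a, (1:ℝ) ∂ν := by
      refine integral_congr_ae (hY0.mono fun a ha => ?_)
      simp [ha]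
    rw [this]
    simp only [integral_const, probReal_univ, ENNReal.toReal_one, smul_eq_mul, one_mul, mul_one]
    exact Real.one_le_exp (by positivity)
  · -- B > 0
    have hpt : ∀ᵐ a ∂ν, Real.exp (t * Y a) ≤
        Real.cosh (t * B) + (Real.sinh (t * B) / B) * Y a := by
      refine hbdd.mono fun a ha => ?_
      have h1 : -B ≤ Y a := neg_le_of_abs_le ha
      have h2 : Y a ≤ B := le_of_abs_le ha
      have hBne : B ≠ 0 := hBpos.ne'
      have hθ0 : 0 ≤ (B + Y a) / (2 * B) := div_nonneg (by linarith) (by linarith)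
      have hθ1 : 0 ≤ (B - Y a) / (2 * B) := by
        apply div_nonneg (by linarith) (by linarith)
      have hθs : (B + Y a) / (2 * B) + (B - Y a) / (2 * B) = 1 := by
        field_simp
        ring
      have hconv := convexOn_exp.2 (Set.mem_univ (t * B)) (Set.mem_univ (-(t * B)))
        hθ0 hθ1 hθs
      have hb2 : (2 * B) ≠ 0 := by positivity
      simp only [smul_eq_mul] at hconv
      have harg : (B + Y a) / (2 * B) * (t * B) + (B - Y a) / (2 * B) * (-(t * B))
          = t * Y a := by
        rw [div_mul_eq_mul_div, div_mul_eq_mul_div, ← add_div, div_eq_iff hb2]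
        ring
      rw [harg] at hconv
      refine hconv.trans (le_of_eq ?_)
      rw [Real.cosh_eq, Real.sinh_eq, div_mul_eq_mul_div, div_mul_eq_mul_div,
        ← add_div]
      field_simp
      try ring
    have hint1 : Integrable (fun a => Real.exp (t * Y a)) ν := by
      refine (integrable_const (Real.exp (|t| * B))).mono'
        ((hY.const_mul t).exp.aestronglyMeasurable) (hbdd.mono fun a ha => ?_)
      rw [Real.norm_eq_abs, abs_of_pos (Real.exp_pos _), Real.exp_le_exp]
      calc t * Y a ≤ |t * Y a| := le_abs_self _
        _ = |t| * |Y a| := abs_mul _ _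
        _ ≤ |t| * B := by gcongr
    have hint2 : Integrable (fun a => Real.cosh (t * B) + (Real.sinh (t * B) / B) * Y a) ν :=
      (integrable_const _).add (hYint.const_mul _)
    have := integral_mono_ae hint1 hint2 hpt
    rw [mgf]
    refine this.trans ?_
    rw [integral_add (integrable_const _) (hYint.const_mul _), integral_const,
      integral_const_mul, hmean]
    simp only [probReal_univ, ENNReal.toReal_one, smul_eq_mul, one_mul, mul_zero, add_zero]
    calc Real.cosh (t * B) ≤ Real.exp ((t * B) ^ 2 / 2) := Real.cosh_le_exp_half_sq _
      _ = Real.exp (t ^ 2 * B ^ 2 / 2) := by rw [mul_pow]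


lemma aux_chernoff {Ω : Type*} [MeasureSpace Ω] [IsProbabilityMeasure (ℙ : Measure Ω)]
    {n : ℕ} (hn : 0 < n) (W : Fin n → Ω → ℝ)
    (hmeas : ∀ i, Measurable (W i))
    (hindep : iIndepFun W ℙ)
    {B : ℝ} (hB : 0 < B)
    (hbdd : ∀ i, ∀ᵐ ω, |W i ω| ≤ B)
    (hmean : ∀ i, ∫ ω, W i ω = 0)
    {w : ℝ} (hw : 0 ≤ w) :
    ℙ {ω | (n : ℝ) * w ≤ ∑ i, W i ω} ≤
      ENNReal.ofReal (Real.exp (-((n : ℝ) * w ^ 2) / (2 * B ^ 2))) := by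
  set t : ℝ := w / B ^ 2 with ht_def
  have ht : 0 ≤ t := div_nonneg hw (by positivity)
  have hint : ∀ i, Integrable (fun ω => Real.exp (t * W i ω)) ℙ := by
    intro i
    refine (integrable_const (Real.exp (|t| * B))).mono'
      (((hmeas i).const_mul t).exp.aestronglyMeasurable) ((hbdd i).mono fun ω hω => ?_)
    rw [Real.norm_eq_abs, abs_of_pos (Real.exp_pos _), Real.exp_le_exp]
    calc t * W i ω ≤ |t * W i ω| := le_abs_self _
      _ = |t| * |W i ω| := abs_mul _ _
      _ ≤ |t| * B := by gcongr
  have hintsum : Integrable (fun ω => Real.exp (t * (∑ i, W i) ω)) ℙ :=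
    hindep.integrable_exp_mul_sum hmeas (fun i _ => hint i)
  have hch := measure_ge_le_exp_mul_mgf (X := ∑ i, W i) (μ := ℙ) ((n : ℝ) * w) ht hintsum
  have hmgf : mgf (∑ i, W i) ℙ t ≤ Real.exp ((n : ℝ) * (t ^ 2 * B ^ 2 / 2)) := by
    rw [hindep.mgf_sum hmeas]
    calc ∏ i, mgf (W i) ℙ t ≤ ∏ _i : Fin n, Real.exp (t ^ 2 * B ^ 2 / 2) := by
          refine Finset.prod_le_prod (fun i _ => mgf_nonneg) (fun i _ => ?_)
          exact aux_mgf_le ℙ (hmeas i) hB.le (hbdd i) (hmean i) t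
      _ = Real.exp ((n : ℝ) * (t ^ 2 * B ^ 2 / 2)) := by
          rw [Finset.prod_const, ← Real.exp_nat_mul]
          simp
  have hexp : Real.exp (-t * ((n : ℝ) * w)) * Real.exp ((n : ℝ) * (t ^ 2 * B ^ 2 / 2))
      = Real.exp (-((n : ℝ) * w ^ 2) / (2 * B ^ 2)) := by
    rw [← Real.exp_add]
    congr 1
    have hB2 : (B : ℝ) ^ 2 ≠ 0 := by positivity
    rw [ht_def]
    field_simp
    ring
  have htot : (ℙ {ω | (n : ℝ) * w ≤ (∑ i, W i) ω}).toReal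
      ≤ Real.exp (-((n : ℝ) * w ^ 2) / (2 * B ^ 2)) := by
    refine hch.trans ?_
    rw [← hexp]
    exact mul_le_mul_of_nonneg_left hmgf (Real.exp_nonneg _)
  have hfin : ℙ {ω | (n : ℝ) * w ≤ (∑ i, W i) ω} ≠ ⊤ := measure_ne_top _ _
  have := (ENNReal.le_ofReal_iff_toReal_le hfin (Real.exp_nonneg _)).mpr htot
  convert this using 3
  simp [Finset.sum_apply]

set_option maxHeartbeats 1600000 in
/-- Guarantee for reliable model selection with empirical-Bernstein
widths under strong convexity (Theorem 2.4, eq. (5)).  With `γ ≥ 3` and `F`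
`μc`-strongly convex with minimizer `x* ∈ 𝒳`, with probability at least `1 - 2δ`:
`F (x k̂_rely) - F* ≤ 4 (min_k F (x k) - F*) + (128/μc)(2L√(2c̃/(n-1)) + (14/3) L̂ c̃/(n-1))²`. -/
theorem stmt3
    {E : Type*} [NormedAddCommGroup E] [NormedSpace ℝ E] [FiniteDimensional ℝ E]
    {𝒮 : Type*} [MeasurableSpace 𝒮] (μsamp : Measure 𝒮) [IsProbabilityMeasure μsamp]
    {Ω : Type*} [MeasureSpace Ω] [IsProbabilityMeasure (ℙ : Measure Ω)]
    (𝒳 : Set E) (hclosed : IsClosed 𝒳) (hconvset : Convex ℝ 𝒳) (h0mem : (0 : E) ∈ 𝒳)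
    (f : E → 𝒮 → ℝ)
    (hfmeas : ∀ x, Measurable (f x))
    (hfconv : ∀ᵐ s ∂μsamp, ConvexOn ℝ 𝒳 fun x => f x s)
    (hfint : ∀ x ∈ 𝒳, Integrable (f x) μsamp)
    (L Lhat : ℝ) (hL : 0 < L) (hLhat : L ≤ Lhat)
    (hLip : ∀ᵐ s ∂μsamp, ∀ x ∈ 𝒳, ∀ x' ∈ 𝒳, |f x s - f x' s| ≤ L * ‖x - x'‖)
    (n : ℕ) (hn : 2 ≤ n)
    (S : Fin n → Ω → 𝒮)
    (hSmeas : ∀ i, Measurable (S i))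
    (hSlaw : ∀ i, Measure.map (S i) ℙ = μsamp)
    (hSindep : iIndepFun S ℙ)
    (F : E → ℝ) (hF : ∀ x, F x = ∫ s, f x s ∂μsamp)
    (Fbar : Ω → E → ℝ) (hFbar : ∀ ω x, Fbar ω x = (∑ i, f x (S i ω)) / n)
    (μc : ℝ) (hμc : 0 < μc)
    (F' : E → E →L[ℝ] ℝ)
    (hSC : ∀ u ∈ 𝒳, ∀ v ∈ 𝒳, F v + F' v (u - v) + μc / 2 * ‖u - v‖ ^ 2 ≤ F u)
    (xstar : E) (hxstarmem : xstar ∈ 𝒳) (hxstarmin : ∀ y ∈ 𝒳, F xstar ≤ F y)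
    (K : ℕ) (hK : 0 < K)
    (x : Fin (K + 1) → E) (hx0 : x 0 = 0) (hxmem : ∀ k, x k ∈ 𝒳)
    (δ : ℝ) (hδ : δ ∈ Set.Ioo (0 : ℝ) 1)
    (γ : ℝ) (hγ : 3 ≤ γ)
    (c : ℝ) (hc : c = Real.log (4 * K / δ))
    (σsq : Ω → Fin (K + 1) → ℝ)
    (hσsq : ∀ ω k, σsq ω k =
      (∑ i, (f (x k) (S i ω) - f 0 (S i ω) - (Fbar ω (x k) - Fbar ω 0)) ^ 2) / (n - 1))
    (τ : Ω → Fin (K + 1) → ℝ) (hτ0 : ∀ ω, τ ω 0 = 0)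
    (hτ : ∀ ω k, k ≠ 0 → τ ω k =
      Real.sqrt (2 * c * σsq ω k / n) + c * (14 * Lhat * ‖x k‖) / (3 * (n - 1)))
    (θ : Ω → ℝ) (hθ : ∀ ω, θ ω = ⨅ k, (Fbar ω (x k) + γ * τ ω k))
    (krely : Ω → Fin (K + 1)) (hkrelymeas : Measurable krely)
    (hkrelymem : ∀ ω, Fbar ω (x (krely ω)) + τ ω (krely ω) ≤ θ ω)
    (hkrelymin : ∀ ω k, Fbar ω (x k) + τ ω k ≤ θ ω →
      Fbar ω (x (krely ω)) ≤ Fbar ω (x k)) :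
    ENNReal.ofReal (1 - 2 * δ) ≤
      ℙ {ω | F (x (krely ω)) - F xstar ≤
        4 * ((⨅ k, F (x k)) - F xstar) +
          128 / μc *
            (2 * L * Real.sqrt (2 * c / (n - 1)) + 14 / 3 * Lhat * c / (n - 1)) ^ 2} := by
  obtain ⟨hδ0, hδ1⟩ := hδ
  -- numeric facts
  have hK1 : (1:ℝ) ≤ (K:ℝ) := by exact_mod_cast hK
  have hnR : (2:ℝ) ≤ (n:ℝ) := by exact_mod_cast hn
  have hn1 : (0:ℝ) < (n:ℝ) - 1 := by linarith
  have hn0 : (0:ℝ) < (n:ℝ) := by linarith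
  have hnpos : 0 < n := lt_of_lt_of_le two_pos hn
  have hratio : (2:ℝ) < 4 * K / δ := by
    rw [lt_div_iff₀ hδ0]; nlinarith
  have hc0 : 0 < c := by
    rw [hc]; exact Real.log_pos (by linarith)
  have hlog2c : Real.log 2 < c := by
    rw [hc]; exact Real.log_lt_log (by norm_num) hratio
  set c₃ : ℝ := c - Real.log 2 with hc₃def
  have hc₃0 : 0 < c₃ := by simp only [hc₃def]; linarith
  have hc₃c : c₃ ≤ c := by
    have h2 : (0:ℝ) < Real.log 2 := Real.log_pos (by norm_num)
    simp only [hc₃def]; linarith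
  have hLhat0 : 0 < Lhat := lt_of_lt_of_le hL hLhat
  set T : ℝ := 2 * L * Real.sqrt (2 * c / ((n:ℝ) - 1)) + 14 / 3 * Lhat * c / ((n:ℝ) - 1)
    with hTdef
  have hT0 : 0 ≤ T := by
    have h1 : 0 ≤ 2 * L * Real.sqrt (2 * c / ((n:ℝ) - 1)) := by positivity
    have h2 : 0 ≤ 14 / 3 * Lhat * c / ((n:ℝ) - 1) := by positivity
    simp only [hTdef]; linarith
  -- strong convexity consequence
  have hSC1 : ∀ u ∈ 𝒳, μc / 2 * ‖u - xstar‖ ^ 2 ≤ F u - F xstar := by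
    intro u hu
    have hBnn : 0 ≤ F u - F xstar := by
      have := hxstarmin u hu; linarith
    have hstep : ∀ t : ℝ, 0 < t → t < 1 →
        (1 - t) * (μc / 2 * ‖u - xstar‖ ^ 2) ≤ F u - F xstar := by
      intro t ht0 ht1
      set ut := xstar + t • (u - xstar) with hut
      have hmem : ut ∈ 𝒳 := hconvset.add_smul_sub_mem hxstarmem hu ⟨ht0.le, ht1.le⟩
      have h1 := hSC xstar hxstarmem ut hmem
      have h2 := hSC u hu ut hmem
      have hmin := hxstarmin ut hmem
      have hx1 : xstar - ut = (-t) • (u - xstar) := by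
        simp only [hut]; module
      have hx2 : u - ut = (1 - t) • (u - xstar) := by
        simp only [hut]; module
      set G' := (F' ut) (u - xstar) with hG'
      set D2 := ‖u - xstar‖ ^ 2 with hD2
      have hD2nn : 0 ≤ D2 := by positivity
      have e1 : (F' ut) (xstar - ut) = -t * G' := by
        rw [hx1, _root_.map_smul, smul_eq_mul]
      have e2 : (F' ut) (u - ut) = (1 - t) * G' := by
        rw [hx2, _root_.map_smul, smul_eq_mul]
      have e3 : ‖xstar - ut‖ ^ 2 = t ^ 2 * D2 := by
        rw [hx1, norm_smul, Real.norm_eq_abs, abs_neg, abs_of_pos ht0, mul_pow]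
      have e4 : ‖u - ut‖ ^ 2 = (1 - t) ^ 2 * D2 := by
        rw [hx2, norm_smul, Real.norm_eq_abs,
          abs_of_nonneg (by linarith : (0:ℝ) ≤ 1 - t), mul_pow]
      rw [e1, e3] at h1
      rw [e2, e4] at h2
      have hg : μc / 2 * t * D2 ≤ G' := by
        nlinarith [h1, hmin, ht0, mul_pos ht0 ht0]
      have hgg : (1 - t) * (μc / 2 * t * D2) ≤ (1 - t) * G' :=
        mul_le_mul_of_nonneg_left hg (by linarith)
      nlinarith [h2, hmin, hgg, hD2nn, ht0, ht1]
    by_contra hcon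
    push_neg at hcon
    set A := μc / 2 * ‖u - xstar‖ ^ 2 with hA
    set B := F u - F xstar with hB
    have hApos : 0 < A := lt_of_le_of_lt hBnn hcon
    have ht' : 0 < (A - B) / (2 * A) := div_pos (by linarith) (by linarith)
    have ht1' : (A - B) / (2 * A) < 1 := by
      rw [div_lt_one (by linarith)]; linarith
    have hh := hstep _ ht' ht1'
    have heq : (1 - (A - B) / (2 * A)) * A = A - (A - B) / 2 := by
      field_simp
    rw [heq] at hh
    linarith
  -- analysis objects
  set U : Fin (K+1) → 𝒮 → ℝ := fun k s => f (x k) s - f xstar s with hUdef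
  set M : Fin (K+1) → ℝ := fun k => F (x k) - F xstar with hMdef
  set d : Fin (K+1) → ℝ := fun k => ‖x k - xstar‖ with hddef
  set w : Fin (K+1) → ℝ := fun k => 2 * L * d k * Real.sqrt (2 * c₃ / n) with hwdef
  have hd0 : ∀ k, 0 ≤ d k := fun k => norm_nonneg _
  have hw0 : ∀ k, 0 ≤ w k := fun k => by
    have := hd0 k
    simp only [hwdef]
    positivity
  have hUmeas : ∀ k, Measurable (U k) := fun k => (hfmeas _).sub (hfmeas _)
  have hUmean : ∀ k, ∫ s, U k s ∂μsamp = M k := by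
    intro k
    simp only [hUdef, hMdef]
    rw [integral_sub (hfint _ (hxmem k)) (hfint _ hxstarmem), ← hF, ← hF]
  have hUbdd : ∀ k, ∀ᵐ s ∂μsamp, |U k s| ≤ L * d k :=
    fun k => hLip.mono fun s hs => hs (x k) (hxmem k) xstar hxstarmem
  have hMbdd : ∀ k, |M k| ≤ L * d k := by
    intro k
    rw [← hUmean k]
    have hb := norm_integral_le_of_norm_le_const (μ := μsamp) (f := U k)
      (C := L * d k) ((hUbdd k).mono fun s hs => by simpa [Real.norm_eq_abs] using hs)
    simpa [Real.norm_eq_abs, measure_univ] using hb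
  -- transported per-sample facts
  have hAE : ∀ i : Fin n, ∀ᵐ ω, ∀ u ∈ 𝒳, ∀ v ∈ 𝒳,
      |f u (S i ω) - f v (S i ω)| ≤ L * ‖u - v‖ := by
    intro i
    have h' : ∀ᵐ s' ∂(Measure.map (S i) ℙ), ∀ u ∈ 𝒳, ∀ v ∈ 𝒳,
        |f u s' - f v s'| ≤ L * ‖u - v‖ := by rw [hSlaw i]; exact hLip
    exact ae_of_ae_map (hSmeas i).aemeasurable h'
  have hUSbdd : ∀ k (i : Fin n), ∀ᵐ ω, |U k (S i ω)| ≤ L * d k := by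
    intro k i
    exact (hAE i).mono fun ω hω => hω (x k) (hxmem k) xstar hxstarmem
  have hUSmeas : ∀ k (i : Fin n), Measurable fun ω => U k (S i ω) :=
    fun k i => (hUmeas k).comp (hSmeas i)
  have hUSint : ∀ k (i : Fin n), Integrable (fun ω => U k (S i ω)) ℙ := by
    intro k i
    exact (integrable_const (L * d k)).mono' (hUSmeas k i).aestronglyMeasurable
      ((hUSbdd k i).mono fun ω hω => by simpa [Real.norm_eq_abs] using hω)
  have hMean_i : ∀ k (i : Fin n), ∫ ω, U k (S i ω) ∂ℙ = M k := by
    intro k i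
    rw [← hUmean k, ← hSlaw i,
      integral_map (hSmeas i).aemeasurable (hUmeas k).aestronglyMeasurable]
  -- good events
  set Gset : Fin (K+1) → Set Ω :=
    fun k => {ω | |(∑ i, U k (S i ω)) - n * M k| ≤ n * w k} with hGsetdef
  have hGmeas : ∀ k, MeasurableSet (Gset k) := by
    intro k
    have hm : Measurable fun ω => |(∑ i, U k (S i ω)) - (n:ℝ) * M k| :=
      ((Finset.univ.measurable_sum fun i _ => hUSmeas k i).sub measurable_const).abs
    exact measurableSet_le hm measurable_const
  have hKne : (K:ℝ) ≠ 0 := by positivity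
  have hexpval : Real.exp (-c₃) = δ / (2 * K) := by
    have h4K : (0:ℝ) < 4 * K / δ := by positivity
    have he : Real.exp (-c) = δ / (4 * K) := by
      rw [hc, Real.exp_neg, Real.exp_log h4K, inv_div]
    have : Real.exp (-c₃) = Real.exp (Real.log 2) * Real.exp (-c) := by
      rw [← Real.exp_add, hc₃def]; ring_nf
    rw [this, Real.exp_log (by norm_num : (0:ℝ) < 2), he]
    field_simp
    ring
  have hGbad : ∀ k, ℙ (Gset k)ᶜ ≤ ENNReal.ofReal (δ / K) := by
    intro k
    by_cases hdk : d k = 0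
    · -- degenerate: the event holds a.e.
      have hMk : M k = 0 := by
        have h := hMbdd k
        rw [hdk, mul_zero] at h
        exact abs_eq_zero.mp (le_antisymm h (abs_nonneg _))
      have hae0 : ∀ᵐ ω, ω ∈ Gset k := by
        have h2 : ∀ᵐ ω, ∀ i : Fin n, U k (S i ω) = 0 := by
          rw [ae_all_iff]
          intro i
          refine (hUSbdd k i).mono fun ω hω => ?_
          rw [hdk, mul_zero] at hω
          exact abs_eq_zero.mp (le_antisymm hω (abs_nonneg _))
        refine h2.mono fun ω hω => ?_
        simp only [hGsetdef, Set.mem_setOf_eq]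
        rw [Finset.sum_congr rfl fun i _ => hω i]
        simp only [hMk, hwdef, hdk, Finset.sum_const_zero, mul_zero, sub_zero, abs_zero,
          zero_mul, mul_zero, le_refl]
      have hzero : ℙ (Gset k)ᶜ = 0 := by
        have h := ae_iff.mp hae0
        exact h
      rw [hzero]
      exact zero_le
    · have hdpos : 0 < d k := lt_of_le_of_ne (hd0 k) (Ne.symm hdk)
      set B := 2 * L * d k with hBdef
      have hBpos : 0 < B := by positivity
      set Wp : Fin n → Ω → ℝ := fun i => (fun s => U k s - M k) ∘ S i with hWp
      set Wm : Fin n → Ω → ℝ := fun i => (fun s => M k - U k s) ∘ S i with hWm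
      have hWpmeas : ∀ i, Measurable (Wp i) :=
        fun i => ((hUmeas k).sub measurable_const).comp (hSmeas i)
      have hWmmeas : ∀ i, Measurable (Wm i) :=
        fun i => (measurable_const.sub (hUmeas k)).comp (hSmeas i)
      have hWpindep : iIndepFun Wp ℙ :=
        hSindep.comp _ (fun i => (hUmeas k).sub measurable_const)
      have hWmindep : iIndepFun Wm ℙ :=
        hSindep.comp _ (fun i => measurable_const.sub (hUmeas k))
      have hWpbdd : ∀ i, ∀ᵐ ω, |Wp i ω| ≤ B := by
        intro i
        refine (hUSbdd k i).mono fun ω hω => ?_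
        have h1 := abs_le.mp hω
        have h2 := abs_le.mp (hMbdd k)
        simp only [hWp, Function.comp_apply]
        rw [abs_le, hBdef]
        constructor <;> [linarith; linarith]
      have hWmbdd : ∀ i, ∀ᵐ ω, |Wm i ω| ≤ B := by
        intro i
        refine (hUSbdd k i).mono fun ω hω => ?_
        have h1 := abs_le.mp hω
        have h2 := abs_le.mp (hMbdd k)
        simp only [hWm, Function.comp_apply]
        rw [abs_le, hBdef]
        constructor <;> [linarith; linarith]
      have hWpmean : ∀ i, ∫ ω, Wp i ω = 0 := by
        intro i
        simp only [hWp, Function.comp_apply]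
        rw [integral_sub (hUSint k i) (integrable_const _), hMean_i k i, integral_const]
        simp
      have hWmmean : ∀ i, ∫ ω, Wm i ω = 0 := by
        intro i
        simp only [hWm, Function.comp_apply]
        rw [integral_sub (integrable_const _) (hUSint k i), hMean_i k i, integral_const]
        simp
      have hchp := aux_chernoff hnpos Wp hWpmeas hWpindep hBpos hWpbdd hWpmean (hw0 k)
      have hchm := aux_chernoff hnpos Wm hWmmeas hWmindep hBpos hWmbdd hWmmean (hw0 k)
      have hexpo : -((n:ℝ) * (w k) ^ 2) / (2 * B ^ 2) = -c₃ := by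
        have hsq : (w k) ^ 2 = B ^ 2 * (2 * c₃ / n) := by
          simp only [hwdef, hBdef]
          rw [mul_pow, Real.sq_sqrt (by positivity)]
        rw [hsq]
        field_simp
      rw [hexpo, hexpval] at hchp hchm
      have hsub : (Gset k)ᶜ ⊆
          {ω | (n:ℝ) * w k ≤ ∑ i, Wp i ω} ∪ {ω | (n:ℝ) * w k ≤ ∑ i, Wm i ω} := by
        intro ω hω
        simp only [hGsetdef, Set.mem_compl_iff, Set.mem_setOf_eq, not_le] at hω
        have hsump : ∑ i, Wp i ω = (∑ i, U k (S i ω)) - n * M k := by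
          have he : ∀ i : Fin n, Wp i ω = U k (S i ω) - M k := fun i => rfl
          rw [Finset.sum_congr rfl fun i _ => he i, Finset.sum_sub_distrib,
            Finset.sum_const, Finset.card_univ, Fintype.card_fin, nsmul_eq_mul]
        have hsumm : ∑ i, Wm i ω = (n:ℝ) * M k - (∑ i, U k (S i ω)) := by
          have he : ∀ i : Fin n, Wm i ω = M k - U k (S i ω) := fun i => rfl
          rw [Finset.sum_congr rfl fun i _ => he i, Finset.sum_sub_distrib,
            Finset.sum_const, Finset.card_univ, Fintype.card_fin, nsmul_eq_mul]
        rcases lt_abs.mp hω with h | h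
        · left; simp only [Set.mem_setOf_eq, hsump]; linarith
        · right; simp only [Set.mem_setOf_eq, hsumm]; linarith
      calc ℙ (Gset k)ᶜ
          ≤ ℙ ({ω | (n:ℝ) * w k ≤ ∑ i, Wp i ω} ∪ {ω | (n:ℝ) * w k ≤ ∑ i, Wm i ω}) :=
            measure_mono hsub
        _ ≤ ℙ {ω | (n:ℝ) * w k ≤ ∑ i, Wp i ω} + ℙ {ω | (n:ℝ) * w k ≤ ∑ i, Wm i ω} :=
            measure_union_le _ _
        _ ≤ ENNReal.ofReal (δ / (2 * K)) + ENNReal.ofReal (δ / (2 * K)) := add_le_add hchp hchm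
        _ = ENNReal.ofReal (δ / K) := by
            rw [← ENNReal.ofReal_add (by positivity) (by positivity)]
            congr 1
            field_simp
            ring
  -- probability assembly
  have hUnion : ℙ (⋃ k, (Gset k)ᶜ) ≤ ENNReal.ofReal (2 * δ) := by
    calc ℙ (⋃ k, (Gset k)ᶜ) ≤ ∑' k, ℙ (Gset k)ᶜ := measure_iUnion_le _
      _ ≤ ∑' (_k : Fin (K+1)), ENNReal.ofReal (δ / K) := ENNReal.tsum_le_tsum fun k => hGbad k
      _ = ((K+1 : ℕ) : ENNReal) * ENNReal.ofReal (δ / K) := by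
          rw [tsum_fintype]
          simp [Finset.sum_const, Fintype.card_fin, nsmul_eq_mul]
      _ ≤ ENNReal.ofReal (2 * δ) := by
          have hcast : ((K+1 : ℕ) : ENNReal) = ENNReal.ofReal ((K:ℝ) + 1) := by
            rw [← ENNReal.ofReal_natCast (K+1)]
            norm_num
          rw [hcast, ← ENNReal.ofReal_mul (by positivity)]
          apply ENNReal.ofReal_le_ofReal
          rw [← mul_div_assoc, div_le_iff₀ (by linarith : (0:ℝ) < (K:ℝ))]
          nlinarith
  -- the deterministic core
  have hcore : ∀ ω, (∀ k, ω ∈ Gset k) →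
      (∀ i : Fin n, ∀ u ∈ 𝒳, ∀ v ∈ 𝒳, |f u (S i ω) - f v (S i ω)| ≤ L * ‖u - v‖) →
      F (x (krely ω)) - F xstar ≤
        4 * ((⨅ k, F (x k)) - F xstar) + 128 / μc * T ^ 2 := by
    intro ω hdev' hlip
    set j := krely ω with hj
    have hmem' : Fbar ω (x j) + τ ω j ≤ θ ω := by
      rw [hj]; exact hkrelymem ω
    have hmin' : ∀ k, Fbar ω (x k) + τ ω k ≤ θ ω → Fbar ω (x j) ≤ Fbar ω (x k) := by
      intro k hk
      rw [hj]; exact hkrelymin ω k hk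
    -- deviations
    set Dv : Fin (K+1) → ℝ := fun k => (∑ i, U k (S i ω)) / n - M k with hDvdef
    have hDvb : ∀ k, |Dv k| ≤ w k := by
      intro k
      have h := hdev' k
      simp only [hGsetdef, Set.mem_setOf_eq] at h
      have heq : Dv k = ((∑ i, U k (S i ω)) - n * M k) / n := by
        simp only [hDvdef]; field_simp
      rw [heq, abs_div, abs_of_pos hn0, div_le_iff₀ hn0]
      linarith
    -- Fbar decomposition
    have hFbar_eq : ∀ k, Fbar ω (x k) =
        F (x k) + Dv k + ((∑ i, f xstar (S i ω)) / n - F xstar) := by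
      intro k
      have hsum : (∑ i, U k (S i ω)) =
          (∑ i, f (x k) (S i ω)) - (∑ i, f xstar (S i ω)) := by
        simp only [hUdef, Finset.sum_sub_distrib]
      rw [hFbar ω (x k)]
      simp only [hDvdef, hMdef, hsum]
      field_simp
      ring
    -- widths
    set Pm : Fin (K+1) → Fin n → ℝ :=
      fun k i => f (x k) (S i ω) - f 0 (S i ω) - (Fbar ω (x k) - Fbar ω 0) with hPmdef
    set Q : Fin (K+1) → ℝ := fun k => Real.sqrt (∑ i, (Pm k i) ^ 2) with hQdef
    have hQnn : ∀ k, 0 ≤ Q k := fun k => Real.sqrt_nonneg _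
    set κ : ℝ := Real.sqrt (2 * c / ((n:ℝ) * ((n:ℝ) - 1))) with hκdef
    set β : ℝ := 14 * Lhat * c / (3 * ((n:ℝ) - 1)) with hβdef
    have hκnn : 0 ≤ κ := Real.sqrt_nonneg _
    have hβnn : 0 ≤ β := by positivity
    have hτeq : ∀ k, τ ω k = κ * Q k + β * ‖x k‖ := by
      intro k
      by_cases hk0 : k = 0
      · subst hk0
        rw [hτ0 ω]
        have hP0 : ∀ i, Pm 0 i = 0 := by
          intro i
          simp only [hPmdef, hx0, sub_self, sub_zero]
        have hQ0 : Q 0 = 0 := by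
          simp only [hQdef]
          rw [Finset.sum_congr rfl fun i _ => by rw [hP0 i]]
          simp
        rw [hQ0, hx0]
        simp
      · rw [hτ ω k hk0, hσsq ω k]
        have h1 : 2 * c * ((∑ i, (Pm k i) ^ 2) / ((n:ℝ) - 1)) / n
            = (2 * c / ((n:ℝ) * ((n:ℝ) - 1))) * (∑ i, (Pm k i) ^ 2) := by
          rw [← mul_div_assoc, div_div, div_mul_eq_mul_div, mul_comm ((n:ℝ) - 1) (n:ℝ)]
        have hsum_eq : (∑ i, (f (x k) (S i ω) - f 0 (S i ω) - (Fbar ω (x k) - Fbar ω 0)) ^ 2)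
            = ∑ i, (Pm k i) ^ 2 := by
          simp only [hPmdef]
        rw [hsum_eq, h1, Real.sqrt_mul (by positivity)]
        simp only [hQdef, hκdef, hβdef]
        ring
    have hτnn : ∀ k, 0 ≤ τ ω k := by
      intro k
      rw [hτeq k]
      have := hQnn k
      positivity
    -- Lipschitzness of widths
    have hFbardiff : ∀ k m, Fbar ω (x k) - Fbar ω (x m)
        = (∑ i, (f (x k) (S i ω) - f (x m) (S i ω))) / n := by
      intro k m
      rw [hFbar ω (x k), hFbar ω (x m), Finset.sum_sub_distrib]
      field_simp
    have hQlip : ∀ k m, Q k ≤ Q m + Real.sqrt n * (2 * L * ‖x k - x m‖) := by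
      intro k m
      have hVbd : ∀ i : Fin n, |f (x k) (S i ω) - f (x m) (S i ω)| ≤ L * ‖x k - x m‖ :=
        fun i => hlip i (x k) (hxmem k) (x m) (hxmem m)
      have hVbar : |(∑ i, (f (x k) (S i ω) - f (x m) (S i ω))) / n| ≤ L * ‖x k - x m‖ := by
        rw [abs_div, abs_of_pos hn0, div_le_iff₀ hn0]
        calc |∑ i, (f (x k) (S i ω) - f (x m) (S i ω))|
            ≤ ∑ i, |f (x k) (S i ω) - f (x m) (S i ω)| := Finset.abs_sum_le_sum_abs _ _
          _ ≤ ∑ _i : Fin n, L * ‖x k - x m‖ := Finset.sum_le_sum fun i _ => hVbd i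
          _ = L * ‖x k - x m‖ * n := by
              rw [Finset.sum_const, Finset.card_univ, Fintype.card_fin, nsmul_eq_mul]; ring
      have hPdiff : ∀ i, |Pm k i - Pm m i| ≤ 2 * L * ‖x k - x m‖ := by
        intro i
        have heq : Pm k i - Pm m i = (f (x k) (S i ω) - f (x m) (S i ω))
            - (Fbar ω (x k) - Fbar ω (x m)) := by
          simp only [hPmdef]; ring
        rw [heq, hFbardiff k m]
        have h1 := abs_le.mp (hVbd i)
        have h2 := abs_le.mp hVbar
        rw [abs_le]
        constructor <;> [linarith; linarith]
      have hdecomp : ∀ i, Pm k i = Pm m i + (Pm k i - Pm m i) := fun i => by ring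
      calc Q k = Real.sqrt (∑ i, (Pm m i + (Pm k i - Pm m i)) ^ 2) := by
            simp only [hQdef]
            congr 1
            exact Finset.sum_congr rfl fun i _ => by rw [← hdecomp i]
        _ ≤ Real.sqrt (∑ i, (Pm m i) ^ 2) + Real.sqrt (∑ i, (Pm k i - Pm m i) ^ 2) :=
            aux_sqrt_sum_sq_add_le _ _
        _ ≤ Q m + Real.sqrt n * (2 * L * ‖x k - x m‖) := by
            have hb : (∑ i, (Pm k i - Pm m i) ^ 2) ≤ (n:ℝ) * (2 * L * ‖x k - x m‖) ^ 2 := by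
              calc (∑ i, (Pm k i - Pm m i) ^ 2)
                  ≤ ∑ _i : Fin n, (2 * L * ‖x k - x m‖) ^ 2 := by
                    refine Finset.sum_le_sum fun i _ => ?_
                    have := hPdiff i
                    nlinarith [abs_nonneg (Pm k i - Pm m i), sq_abs (Pm k i - Pm m i)]
                _ = (n:ℝ) * (2 * L * ‖x k - x m‖) ^ 2 := by
                    rw [Finset.sum_const, Finset.card_univ, Fintype.card_fin, nsmul_eq_mul]
            have := Real.sqrt_le_sqrt hb
            have heq2 : Real.sqrt ((n:ℝ) * (2 * L * ‖x k - x m‖) ^ 2)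
                = Real.sqrt n * (2 * L * ‖x k - x m‖) := by
              rw [Real.sqrt_mul (by positivity), Real.sqrt_sq (by positivity)]
            simp only [hQdef]
            linarith [this, heq2 ▸ this]
    have hκsqrtn : κ * Real.sqrt n = Real.sqrt (2 * c / ((n:ℝ) - 1)) := by
      rw [hκdef, ← Real.sqrt_mul (by positivity)]
      congr 1
      field_simp
    have hτlip : ∀ k m, τ ω k ≤ τ ω m + T * ‖x k - x m‖ := by
      intro k m
      rw [hτeq k, hτeq m]
      have h1 : κ * Q k ≤ κ * Q m + κ * Real.sqrt n * (2 * L * ‖x k - x m‖) := by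
        have := hQlip k m
        nlinarith [hκnn]
      have h2 : β * ‖x k‖ ≤ β * ‖x m‖ + β * ‖x k - x m‖ := by
        have htri : ‖x k‖ - ‖x m‖ ≤ ‖x k - x m‖ := norm_sub_norm_le _ _
        nlinarith [hβnn]
      have h3 : κ * Real.sqrt n * (2 * L * ‖x k - x m‖) + β * ‖x k - x m‖
          = T * ‖x k - x m‖ := by
        rw [hκsqrtn, hTdef, hβdef]
        field_simp
      linarith
    clear_value j Dv Pm Q κ β T U M d w c₃
    -- key chain
    have hkey : ∀ k, F (x j) ≤ F (x k) + T * ‖x k - x j‖ + w k + w j := by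
      intro k
      have hTn : 0 ≤ T * ‖x k - x j‖ := mul_nonneg hT0 (norm_nonneg _)
      obtain ⟨hdk1, hdk2⟩ := abs_le.mp (hDvb k)
      obtain ⟨hdj1, hdj2⟩ := abs_le.mp (hDvb j)
      by_cases hcase : Fbar ω (x k) + τ ω k ≤ θ ω
      · have h1 := hmin' k hcase
        rw [hFbar_eq j, hFbar_eq k] at h1
        linarith [h1, hdk2, hdj1, hTn]
      · have h2 : Fbar ω (x j) + τ ω j ≤ Fbar ω (x k) + τ ω k :=
          le_trans hmem' (le_of_lt (not_le.mp hcase))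
        rw [hFbar_eq j, hFbar_eq k] at h2
        have h3 := hτlip k j
        have h4 := hτnn j
        have h5 := hτnn k
        linarith [h2, h3, h4, h5, hdk2, hdj1, hTn]
    -- distances
    have hdk : ∀ k, μc / 2 * (d k) ^ 2 ≤ F (x k) - F xstar := by
      intro k
      rw [hddef]
      exact hSC1 _ (hxmem k)
    have hnormb : ∀ k, ‖x k - x j‖ ≤ d k + d j := by
      intro k
      rw [hddef]
      have heq : x k - x j = (x k - xstar) - (x j - xstar) := by abel
      rw [heq]
      exact norm_sub_le _ _
    have hwT : ∀ k, w k ≤ T * d k := by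
      intro k
      have h1 : 2 * c₃ / n ≤ 2 * c / ((n:ℝ) - 1) :=
        div_le_div₀ (by positivity) (by linarith) hn1 (by linarith)
      have hs : Real.sqrt (2 * c₃ / n) ≤ Real.sqrt (2 * c / ((n:ℝ) - 1)) :=
        Real.sqrt_le_sqrt h1
      have h2 : 0 ≤ 14 / 3 * Lhat * c / ((n:ℝ) - 1) * d k :=
        mul_nonneg (by positivity) (hd0 k)
      have hval : 2 * L * d k * Real.sqrt (2 * c₃ / n)
          ≤ 2 * L * Real.sqrt (2 * c / ((n:ℝ) - 1)) * d k := by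
        have hm := mul_le_mul_of_nonneg_left hs
          (mul_nonneg (mul_nonneg (by norm_num : (0:ℝ) ≤ 2) hL.le) (hd0 k))
        nlinarith [hm]
      simp only [hwdef, hTdef]
      nlinarith [hval, h2]
    have hfinal : ∀ k, F (x j) - F xstar ≤ 4 * (F (x k) - F xstar) + 128 / μc * T ^ 2 := by
      intro k
      have h1 := hkey k
      have h2 : F (x j) ≤ F (x k) + 2 * T * d k + 2 * T * d j := by
        have ha := hnormb k
        have hb := hwT k
        have hc' := hwT j
        nlinarith [hT0]
      have h12 : F (x j) - F xstar ≤ 4 * (F (x k) - F xstar) + 12 / μc * T ^ 2 := by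
        have hA := hdk j
        have hB := hdk k
        rw [show 12 / μc * T ^ 2 = 12 * T ^ 2 / μc by ring, ← sub_le_iff_le_add',
          le_div_iff₀ hμc]
        nlinarith [hA, hB, sq_nonneg (μc * d j - 4 * T), sq_nonneg (μc * d k - 2 * T),
          hμc, hd0 j, hd0 k, hT0,
          mul_le_mul_of_nonneg_left hA hμc.le, mul_le_mul_of_nonneg_left hB hμc.le,
          mul_le_mul_of_nonneg_left h2 hμc.le]
      have h13 : 12 / μc * T ^ 2 ≤ 128 / μc * T ^ 2 := by
        have h0 : 12 / μc ≤ 128 / μc := by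
          gcongr
          norm_num
        exact mul_le_mul_of_nonneg_right h0 (sq_nonneg T)
      linarith
    obtain ⟨k₀, hk₀⟩ := Finite.exists_min (fun k => F (x k))
    have hbdd : BddBelow (Set.range fun k => F (x k)) :=
      Set.Finite.bddBelow (Set.finite_range _)
    have hinf : (⨅ k, F (x k)) = F (x k₀) :=
      le_antisymm (ciInf_le hbdd k₀) (le_ciInf hk₀)
    rw [hinf]
    exact hfinal k₀
  -- final assembly
  set Etgt : Set Ω := {ω | F (x (krely ω)) - F xstar ≤
        4 * ((⨅ k, F (x k)) - F xstar) + 128 / μc * T ^ 2} with hEtgt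
  have hGoodLip : ∀ᵐ ω, ∀ i : Fin n, ∀ u ∈ 𝒳, ∀ v ∈ 𝒳,
      |f u (S i ω) - f v (S i ω)| ≤ L * ‖u - v‖ := ae_all_iff.mpr hAE
  have hsubset : (⋂ k, Gset k) ∩ {ω | ∀ i : Fin n, ∀ u ∈ 𝒳, ∀ v ∈ 𝒳,
      |f u (S i ω) - f v (S i ω)| ≤ L * ‖u - v‖} ⊆ Etgt := by
    intro ω hω
    obtain ⟨h1, h2⟩ := hω
    exact hcore ω (fun k => Set.mem_iInter.mp h1 k) h2
  have hnull : ℙ {ω | ¬ (∀ i : Fin n, ∀ u ∈ 𝒳, ∀ v ∈ 𝒳,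
      |f u (S i ω) - f v (S i ω)| ≤ L * ‖u - v‖)} = 0 := ae_iff.mp hGoodLip
  have hGle : ℙ (⋂ k, Gset k) ≤ ℙ Etgt := by
    have hstep1 : ℙ (⋂ k, Gset k) ≤ ℙ ((⋂ k, Gset k) ∩ {ω | ∀ i : Fin n, ∀ u ∈ 𝒳, ∀ v ∈ 𝒳,
        |f u (S i ω) - f v (S i ω)| ≤ L * ‖u - v‖}) + ℙ ((⋂ k, Gset k) \ {ω | ∀ i : Fin n,
        ∀ u ∈ 𝒳, ∀ v ∈ 𝒳, |f u (S i ω) - f v (S i ω)| ≤ L * ‖u - v‖}) :=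
      measure_le_inter_add_diff (ℙ : Measure Ω) _ _
    have hstep2 : ℙ ((⋂ k, Gset k) \ {ω | ∀ i : Fin n, ∀ u ∈ 𝒳, ∀ v ∈ 𝒳,
        |f u (S i ω) - f v (S i ω)| ≤ L * ‖u - v‖}) = 0 := by
      refine le_antisymm ?_ zero_le
      rw [← hnull]
      apply measure_mono
      intro ω hω
      exact hω.2
    have hstep3 : ℙ ((⋂ k, Gset k) ∩ {ω | ∀ i : Fin n, ∀ u ∈ 𝒳, ∀ v ∈ 𝒳, |f u (S i ω) - f v (S i ω)| ≤ L * ‖u - v‖}) ≤ ℙ Etgt := measure_mono hsubset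
    rw [hstep2, add_zero] at hstep1
    exact le_trans hstep1 hstep3
  have hInter : ℙ (⋂ k, Gset k) = 1 - ℙ (⋃ k, (Gset k)ᶜ) := by
    have hceq : (⋂ k, Gset k) = (⋃ k, (Gset k)ᶜ)ᶜ := by
      rw [Set.compl_iUnion]
      simp only [compl_compl]
    rw [hceq, prob_compl_eq_one_sub (MeasurableSet.iUnion fun k => (hGmeas k).compl)]
  calc ENNReal.ofReal (1 - 2 * δ) ≤ 1 - ENNReal.ofReal (2 * δ) := by
        rw [← ENNReal.ofReal_one, ← ENNReal.ofReal_sub _ (by positivity)]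
    _ ≤ 1 - ℙ (⋃ k, (Gset k)ᶜ) := tsub_le_tsub_left hUnion _
    _ = ℙ (⋂ k, Gset k) := hInter.symm
    _ ≤ ℙ Etgt := hGle
end

section
/- Let λ > 0 and δ ∈ (0,1) be constants such that P( ‖∇F̄(x*_ζ) − ∇F(x*_ζ)‖_* > λ/2 ) ≤ δ for both ζ = λ/3 and ζ = 3λ. Then P( ‖x*_{3λ}‖ ≤ 3‖x̂_λ‖ ≤ 33‖x*_{λ/3}‖ ) ≥ 1 − 2δ. -/
open MeasureTheory ProbabilityTheory
open Metric Set Filter Topology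
open scoped ENNReal NNReal

set_option maxHeartbeats 1000000

section Aux
variable {E : Type*} [NormedAddCommGroup E] [NormedSpace ℝ E]

lemma dir_tendsto {g : E → ℝ} {L : E →L[ℝ] ℝ} {z : E} (hL : HasFDerivAt g L z) (v : E) :
    Tendsto (fun t : ℝ => (g (z + t • v) - g z) / t) (𝓝[>] (0:ℝ)) (𝓝 (L v)) := by
  have hc : HasDerivAt (fun t : ℝ => z + t • v) v 0 := by
    simpa using ((hasDerivAt_id (0:ℝ)).smul_const v).const_add z
  have hL' : HasFDerivAt g L ((fun t : ℝ => z + t • v) 0) := by simpa using hL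
  have h2 : HasDerivAt (fun t : ℝ => g (z + t • v)) (L v) 0 := hL'.comp_hasDerivAt 0 hc
  have h3 := hasDerivAt_iff_tendsto_slope.1 h2
  have h4 : Tendsto (slope (fun t : ℝ => g (z + t • v)) 0) (𝓝[>] (0:ℝ)) (𝓝 (L v)) :=
    h3.mono_left (nhdsWithin_mono _ (fun t ht => ne_of_gt ht))
  refine h4.congr fun t => ?_
  rw [slope_def_field]
  simp

lemma convex_subgrad {g : E → ℝ} {L : E →L[ℝ] ℝ} {z : E} (hg : ConvexOn ℝ Set.univ g)
    (hL : HasFDerivAt g L z) (v : E) : L v ≤ g (z + v) - g z := by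
  refine le_of_tendsto (dir_tendsto hL v) ?_
  filter_upwards [Ioc_mem_nhdsGT (zero_lt_one (α := ℝ))] with t ht
  rcases ht with ⟨ht0, ht1⟩
  rw [div_le_iff₀ ht0]
  have hcomb : (1 - t) • z + t • (z + v) = z + t • v := by
    rw [smul_add, sub_smul, one_smul]; abel
  have := hg.2 (mem_univ z) (mem_univ (z + v))
    (show (0:ℝ) ≤ 1 - t by linarith) ht0.le (show (1 - t) + t = 1 by ring)
  rw [hcomb] at this
  simp only [smul_eq_mul] at this
  nlinarith [this]

lemma opt_grad_lb {Fn : E → ℝ} {L : E →L[ℝ] ℝ} {z : E} {ζ : ℝ} (hζ : 0 ≤ ζ)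
    (hL : HasFDerivAt Fn L z) (hopt : ∀ y, Fn z + ζ * ‖z‖ ≤ Fn y + ζ * ‖y‖) (v : E) :
    -(ζ * ‖v‖) ≤ L v := by
  refine ge_of_tendsto (dir_tendsto hL v) ?_
  filter_upwards [self_mem_nhdsWithin] with t (ht : 0 < t)
  rw [le_div_iff₀ ht]
  have h1 := hopt (z + t • v)
  have h2 : ‖z + t • v‖ ≤ ‖z‖ + t * ‖v‖ := by
    calc ‖z + t • v‖ ≤ ‖z‖ + ‖t • v‖ := norm_add_le _ _
    _ = ‖z‖ + t * ‖v‖ := by rw [norm_smul, Real.norm_eq_abs, abs_of_pos ht]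
  nlinarith [h1, h2]

lemma opt_grad_abs {Fn : E → ℝ} {L : E →L[ℝ] ℝ} {z : E} {ζ : ℝ} (hζ : 0 ≤ ζ)
    (hL : HasFDerivAt Fn L z) (hopt : ∀ y, Fn z + ζ * ‖z‖ ≤ Fn y + ζ * ‖y‖) (v : E) :
    |L v| ≤ ζ * ‖v‖ := by
  have h1 := opt_grad_lb hζ hL hopt v
  have h2 := opt_grad_lb hζ hL hopt (-v)
  rw [map_neg, norm_neg] at h2
  exact abs_le.2 ⟨h1, by linarith⟩

lemma opt_grad_self {Fn : E → ℝ} {L : E →L[ℝ] ℝ} {z : E} {ζ : ℝ} (hζ : 0 ≤ ζ)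
    (hL : HasFDerivAt Fn L z) (hopt : ∀ y, Fn z + ζ * ‖z‖ ≤ Fn y + ζ * ‖y‖) :
    L z ≤ -(ζ * ‖z‖) := by
  have h : ζ * ‖z‖ ≤ L (-z) := by
    refine ge_of_tendsto (dir_tendsto hL (-z)) ?_
    filter_upwards [Ioc_mem_nhdsGT (zero_lt_one (α := ℝ))] with t ⟨ht0, ht1⟩
    rw [le_div_iff₀ ht0]
    have h1 := hopt (z + t • (-z))
    have h2 : z + t • (-z) = (1 - t) • z := by rw [sub_smul, one_smul, smul_neg]; abel
    have h3 : ‖(1 - t) • z‖ = (1 - t) * ‖z‖ := by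
      rw [norm_smul, Real.norm_eq_abs, abs_of_nonneg (by linarith)]
    rw [h2] at h1 ⊢
    nlinarith [h1, h3]
  have := map_neg L z
  linarith [h, this.symm.le, this.le]

lemma convexOn_finsum {ι : Type*} (t : Finset ι) (g : ι → E → ℝ)
    (h : ∀ i ∈ t, ConvexOn ℝ Set.univ (g i)) :
    ConvexOn ℝ Set.univ (fun x => ∑ i ∈ t, g i x) := by
  classical
  induction t using Finset.induction_on with
  | empty => simpa using convexOn_const (0:ℝ) convex_univ
  | insert a s hnotmem ih =>
    simp only [Finset.sum_insert hnotmem]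
    exact (h a (Finset.mem_insert_self _ _)).add
      (ih fun i hi => h i (Finset.mem_insert_of_mem hi))

lemma det_upper {Fb : E → ℝ} {xh z : E} {lam : ℝ} (hlam : 0 < lam)
    (hFbconv : ConvexOn ℝ Set.univ Fb) {Db L : E →L[ℝ] ℝ}
    (hDb : HasFDerivAt Fb Db z)
    (hopt : ∀ y, Fb xh + lam * ‖xh‖ ≤ Fb y + lam * ‖y‖)
    (hLb : ∀ v, |L v| ≤ lam / 3 * ‖v‖)
    (hdiff : ‖Db - L‖ ≤ lam / 2) :
    ‖xh‖ ≤ 11 * ‖z‖ := by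
  have h1 : Db (xh - z) ≤ Fb xh - Fb z := by
    have := convex_subgrad hFbconv hDb (xh - z)
    simpa using this
  have h2 : Fb xh - Fb z ≤ lam * ‖z‖ - lam * ‖xh‖ := by have := hopt z; linarith
  have h3 : |(Db - L) (xh - z)| ≤ lam / 2 * ‖xh - z‖ := by
    have ha := (Db - L).le_opNorm (xh - z)
    have hb : ‖Db - L‖ * ‖xh - z‖ ≤ lam / 2 * ‖xh - z‖ :=
      mul_le_mul_of_nonneg_right hdiff (norm_nonneg _)
    calc |(Db - L) (xh - z)| = ‖(Db - L) (xh - z)‖ := (Real.norm_eq_abs _).symm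
      _ ≤ ‖Db - L‖ * ‖xh - z‖ := ha
      _ ≤ _ := hb
  have h5 : ‖xh - z‖ ≤ ‖xh‖ + ‖z‖ := norm_sub_le _ _
  have h6 : (Db - L) (xh - z) = Db (xh - z) - L (xh - z) := by simp
  have h7 := abs_le.1 (hLb (xh - z))
  have h3' := abs_le.1 h3
  have e1 : lam / 2 * ‖xh - z‖ ≤ lam / 2 * (‖xh‖ + ‖z‖) :=
    mul_le_mul_of_nonneg_left h5 (by positivity)
  have e2 : lam / 3 * ‖xh - z‖ ≤ lam / 3 * (‖xh‖ + ‖z‖) :=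
    mul_le_mul_of_nonneg_left h5 (by positivity)
  nlinarith [h1, h2, h6, h7.1, h3'.1, e1, e2, hlam, norm_nonneg xh, norm_nonneg z]

lemma det_lower {Fb : E → ℝ} {xh z : E} {lam : ℝ} (hlam : 0 < lam)
    (hFbconv : ConvexOn ℝ Set.univ Fb) {Db L : E →L[ℝ] ℝ}
    (hDb : HasFDerivAt Fb Db z)
    (hopt : ∀ y, Fb xh + lam * ‖xh‖ ≤ Fb y + lam * ‖y‖)
    (hLv : ∀ v, |L v| ≤ 3 * lam * ‖v‖) (hLz : L z ≤ -(3 * lam * ‖z‖))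
    (hdiff : ‖Db - L‖ ≤ lam / 2) :
    ‖z‖ ≤ 3 * ‖xh‖ := by
  have h1 : Db (xh - z) ≤ Fb xh - Fb z := by
    have := convex_subgrad hFbconv hDb (xh - z)
    simpa using this
  have h2 : Fb xh - Fb z ≤ lam * ‖z‖ - lam * ‖xh‖ := by have := hopt z; linarith
  have habs1 : |(Db - L) z| ≤ lam / 2 * ‖z‖ := by
    have ha := (Db - L).le_opNorm z
    have hb : ‖Db - L‖ * ‖z‖ ≤ lam / 2 * ‖z‖ :=
      mul_le_mul_of_nonneg_right hdiff (norm_nonneg _)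
    calc |(Db - L) z| = ‖(Db - L) z‖ := (Real.norm_eq_abs _).symm
      _ ≤ ‖Db - L‖ * ‖z‖ := ha
      _ ≤ _ := hb
  have habs2 : |(Db - L) xh| ≤ lam / 2 * ‖xh‖ := by
    have ha := (Db - L).le_opNorm xh
    have hb : ‖Db - L‖ * ‖xh‖ ≤ lam / 2 * ‖xh‖ :=
      mul_le_mul_of_nonneg_right hdiff (norm_nonneg _)
    calc |(Db - L) xh| = ‖(Db - L) xh‖ := (Real.norm_eq_abs _).symm
      _ ≤ ‖Db - L‖ * ‖xh‖ := ha
      _ ≤ _ := hb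
  have hx := abs_le.1 (hLv xh)
  have hz1 := abs_le.1 habs1
  have hz2 := abs_le.1 habs2
  have i1 : (Db - L) z = Db z - L z := by simp
  have i2 : (Db - L) xh = Db xh - L xh := by simp
  have i3 : Db (xh - z) = Db xh - Db z := by simp
  nlinarith [h1, h2, hx.1, hz1.2, hz2.1, hLz, hlam, norm_nonneg xh, norm_nonneg z, i1, i2, i3]

end Aux

section Diff
variable {E : Type*} [NormedAddCommGroup E] [NormedSpace ℝ E] [FiniteDimensional ℝ E]
variable {𝒮 : Type*} [MeasurableSpace 𝒮]

lemma F_diffAt (μ : Measure 𝒮) [IsProbabilityMeasure μ] (f : E → 𝒮 → ℝ)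
    (hfmeas : ∀ x, Measurable (f x))
    (hfconv : ∀ᵐ s ∂μ, ConvexOn ℝ Set.univ fun x => f x s)
    (hfdiff : ∀ᵐ s ∂μ, Differentiable ℝ fun x => f x s)
    (hfint : ∀ x, Integrable (f x) μ)
    (F : E → ℝ) (hF : ∀ x, F x = ∫ s, f x s ∂μ) (z : E) :
    DifferentiableAt ℝ F z := by
  have hFeq : F = fun x => ∫ s, f x s ∂μ := funext hF
  rcases subsingleton_or_nontrivial E with hE | hE
  · have : F = fun _ => F z := funext fun x => by rw [Subsingleton.elim x z]
    rw [this]; exact differentiableAt_const _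
  set d := Module.finrank ℝ E with hd
  have hd0 : 0 < d := Module.finrank_pos
  have hdR : (0:ℝ) < (d:ℝ) := by exact_mod_cast hd0
  set b := Module.finBasis ℝ E with hb
  set ec : E →L[ℝ] (Fin d → ℝ) := LinearMap.toContinuousLinearMap (b.equivFun.toLinearMap) with hec
  set C : ℝ := ‖ec‖ + 1 with hC
  have hC0 : 0 < C := by positivity
  have hcoord : ∀ u : E, ∀ i, |b.equivFun u i| ≤ C * ‖u‖ := by
    intro u i
    have h1 : |b.equivFun u i| ≤ ‖ec u‖ := by
      have h := norm_le_pi_norm (ec u) i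
      simpa [hec, Real.norm_eq_abs] using h
    have h2 : ‖ec u‖ ≤ ‖ec‖ * ‖u‖ := ec.le_opNorm u
    have h3 : ‖ec‖ * ‖u‖ ≤ C * ‖u‖ :=
      mul_le_mul_of_nonneg_right (by rw [hC]; linarith) (norm_nonneg u)
    linarith
  set M0 : ℝ := 2 * d * C with hM0def
  have hM0 : 0 < M0 := by positivity
  set Dfun : 𝒮 → ℝ := fun s =>
    ∑ i : Fin d, (|f (z + M0 • b i) s - f z s| + |f (z - M0 • b i) s - f z s|) with hDfun
  have hDint : Integrable Dfun μ := by
    apply integrable_finset_sum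
    intro i _
    exact (((hfint _).sub (hfint z)).abs.add ((hfint _).sub (hfint z)).abs)
  have hDnn : ∀ s, 0 ≤ Dfun s := fun s => Finset.sum_nonneg fun i _ => by positivity
  have hbound : ∀ᵐ s ∂μ, ∀ a ∈ ball z 2, |f a s| ≤ |f z s| + Dfun s := by
    filter_upwards [hfconv] with s hs
    have hup : ∀ a ∈ ball z 2, f a s ≤ f z s + Dfun s := by
      intro a ha
      have hun : ‖a - z‖ < 2 := by rw [← dist_eq_norm]; exact mem_ball.1 ha
      set u := a - z with hu
      set c : Fin d → ℝ := b.equivFun u with hc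
      have hcle : ∀ i, |c i| ≤ 2 * C := by
        intro i
        have h1 := hcoord u i
        have h2 : C * ‖u‖ ≤ C * 2 := mul_le_mul_of_nonneg_left hun.le hC0.le
        linarith
      have hrepr : a = ∑ i : Fin d, ((1:ℝ)/d) • (z + ((d:ℝ) * c i) • b i) := by
        have h1 : ∀ i : Fin d, ((1:ℝ)/d) • (z + ((d:ℝ) * c i) • b i)
            = ((1:ℝ)/d) • z + c i • b i := by
          intro i
          rw [smul_add, smul_smul]
          congr 2
          field_simp
        rw [Finset.sum_congr rfl (fun i _ => h1 i), Finset.sum_add_distrib]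
        have h2 : ∑ _i : Fin d, ((1:ℝ)/d) • z = z := by
          rw [Finset.sum_const, Finset.card_univ, Fintype.card_fin, ← Nat.cast_smul_eq_nsmul ℝ,
            smul_smul]
          rw [show (d:ℝ) * ((1:ℝ)/d) = 1 by field_simp, one_smul]
        have h3 : ∑ i : Fin d, c i • b i = u := b.sum_equivFun u
        rw [h2, h3, hu]; abel
      have hj : f a s ≤ ∑ i : Fin d, ((1:ℝ)/d) • f (z + ((d:ℝ) * c i) • b i) s := by
        have := hs.map_sum_le (t := Finset.univ) (w := fun _ : Fin d => (1:ℝ)/d)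
          (p := fun i => z + ((d:ℝ) * c i) • b i)
          (fun i _ => by positivity)
          (by rw [Finset.sum_const, Finset.card_univ, Fintype.card_fin, nsmul_eq_mul]; field_simp)
          (fun i _ => mem_univ _)
        rw [← hrepr] at this
        exact this
      have hterm : ∀ i : Fin d, f (z + ((d:ℝ) * c i) • b i) s ≤ f z s
          + (|f (z + M0 • b i) s - f z s| + |f (z - M0 • b i) s - f z s|) := by
        intro i
        set r : ℝ := (d:ℝ) * c i with hr
        have hrle : |r| ≤ M0 := by
          rw [hr, abs_mul, abs_of_nonneg hdR.le, hM0def]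
          calc (d:ℝ) * |c i| ≤ (d:ℝ) * (2 * C) := mul_le_mul_of_nonneg_left (hcle i) hdR.le
            _ = 2 * d * C := by ring
        set t : ℝ := |r| / M0 with ht
        have ht0 : 0 ≤ t := by positivity
        have ht1 : t ≤ 1 := (div_le_one hM0).2 hrle
        have htM : t * M0 = |r| := by rw [ht]; field_simp
        rcases le_or_gt 0 r with hrpos | hrneg
        · have hpt : z + r • b i = (1 - t) • z + t • (z + M0 • b i) := by
            rw [smul_add, sub_smul, one_smul, smul_smul, htM, abs_of_nonneg hrpos]
            abel
          have hcv := hs.2 (mem_univ z) (mem_univ (z + M0 • b i))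
            (show (0:ℝ) ≤ 1 - t by linarith) ht0 (show (1 - t) + t = 1 by ring)
          rw [← hpt] at hcv
          simp only [smul_eq_mul] at hcv
          have habs2 : t * (f (z + M0 • b i) s - f z s) ≤ |f (z + M0 • b i) s - f z s| := by
            nlinarith [le_abs_self (f (z + M0 • b i) s - f z s),
              abs_nonneg (f (z + M0 • b i) s - f z s)]
          nlinarith [abs_nonneg (f (z - M0 • b i) s - f z s)]
        · have hpt : z + r • b i = (1 - t) • z + t • (z - M0 • b i) := by
            rw [smul_sub, sub_smul, one_smul, smul_smul, htM, abs_of_neg hrneg]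
            rw [show z - t • z + (t • z - (-r) • b i) = z + r • b i by
              rw [neg_smul]; abel]
          have hcv := hs.2 (mem_univ z) (mem_univ (z - M0 • b i))
            (show (0:ℝ) ≤ 1 - t by linarith) ht0 (show (1 - t) + t = 1 by ring)
          rw [← hpt] at hcv
          simp only [smul_eq_mul] at hcv
          have habs2 : t * (f (z - M0 • b i) s - f z s) ≤ |f (z - M0 • b i) s - f z s| := by
            nlinarith [le_abs_self (f (z - M0 • b i) s - f z s),
              abs_nonneg (f (z - M0 • b i) s - f z s)]
          nlinarith [abs_nonneg (f (z + M0 • b i) s - f z s)]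
      calc f a s ≤ ∑ i : Fin d, ((1:ℝ)/d) • f (z + ((d:ℝ) * c i) • b i) s := hj
        _ ≤ ∑ i : Fin d, ((1:ℝ)/d) * (f z s
            + (|f (z + M0 • b i) s - f z s| + |f (z - M0 • b i) s - f z s|)) := by
          apply Finset.sum_le_sum
          intro i _
          simp only [smul_eq_mul]
          exact mul_le_mul_of_nonneg_left (hterm i) (by positivity)
        _ = f z s + ∑ i : Fin d, ((1:ℝ)/d) *
            (|f (z + M0 • b i) s - f z s| + |f (z - M0 • b i) s - f z s|) := by
          rw [Finset.sum_congr rfl (fun i _ => mul_add ((1:ℝ)/d) _ _), Finset.sum_add_distrib,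
            Finset.sum_const, Finset.card_univ, Fintype.card_fin, nsmul_eq_mul]
          field_simp
        _ ≤ f z s + Dfun s := by
          rw [hDfun]
          apply add_le_add_right
          apply Finset.sum_le_sum
          intro i _
          have h1 : ((1:ℝ)/d) ≤ 1 := by
            rw [div_le_one hdR]; exact_mod_cast hd0
          nlinarith [abs_nonneg (f (z + M0 • b i) s - f z s),
            abs_nonneg (f (z - M0 • b i) s - f z s)]
    intro a ha
    have ha' : (2:ℝ) • z - a ∈ ball z 2 := by
      rw [mem_ball, dist_eq_norm]
      rw [show (2:ℝ) • z - a - z = -(a - z) by rw [two_smul]; abel, norm_neg]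
      rw [← dist_eq_norm] at *
      exact mem_ball.1 ha
    have hmid : f z s ≤ (1/2 : ℝ) * f a s + (1/2 : ℝ) * f ((2:ℝ) • z - a) s := by
      have hcomb : ((1:ℝ)/2) • a + ((1:ℝ)/2) • ((2:ℝ) • z - a) = z := by
        rw [smul_sub, smul_smul]
        rw [show (1:ℝ)/2 * 2 = 1 by norm_num, one_smul]
        abel
      have := hs.2 (mem_univ a) (mem_univ ((2:ℝ) • z - a))
        (show (0:ℝ) ≤ 1/2 by norm_num) (show (0:ℝ) ≤ 1/2 by norm_num)
        (show (1:ℝ)/2 + 1/2 = 1 by norm_num)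
      rw [hcomb] at this
      simpa using this
    have h1 := hup a ha
    have h2 := hup _ ha'
    have hlow : f z s - Dfun s ≤ f a s := by linarith
    rw [abs_le]
    constructor
    · have := neg_abs_le (f z s); linarith
    · have := le_abs_self (f z s); linarith
  -- Lipschitz bound
  have h_lip : ∀ᵐ s ∂μ, LipschitzOnWith (Real.nnabs (2 * (|f z s| + Dfun s)))
      (fun x => f x s) (ball z 1) := by
    filter_upwards [hfconv, hbound] with s hs hb
    have hcv : ConvexOn ℝ (ball z 2) (fun x => f x s) :=
      hs.subset (subset_univ _) (convex_ball _ _)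
    have hlip := hcv.lipschitzOnWith_of_abs_le (M := |f z s| + Dfun s) one_pos
      (fun a ha => hb a (mem_ball.2 ha))
    rw [show (2:ℝ) - 1 = 1 by norm_num] at hlip
    intro x hx y hy
    refine le_trans (hlip hx hy) (mul_le_mul_left (ENNReal.coe_le_coe.2 ?_) _)
    rw [div_one, ← NNReal.coe_le_coe, Real.coe_toNNReal', Real.coe_nnabs]
    exact max_le (le_abs_self _) (abs_nonneg _)
  -- measurability of the derivative
  have hF'_meas : AEStronglyMeasurable (fun s => fderiv ℝ (fun x => f x s) z) μ := by
    set ci : Fin d → (E →L[ℝ] ℝ) := fun i => (ContinuousLinearMap.proj i).comp ec with hci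
    have hrep : ∀ T : E →L[ℝ] ℝ, T = ∑ i : Fin d, T (b i) • ci i := by
      intro T
      ext u
      rw [ContinuousLinearMap.sum_apply]
      simp only [hci, ContinuousLinearMap.smul_apply, ContinuousLinearMap.comp_apply,
        ContinuousLinearMap.proj_apply, hec, LinearMap.coe_toContinuousLinearMap',
        LinearEquiv.coe_coe, smul_eq_mul]
      have : ∀ i : Fin d, T (b i) * b.equivFun u i = T (b.equivFun u i • b i) := by
        intro i; rw [T.map_smul, smul_eq_mul]; ring
      rw [Finset.sum_congr rfl fun i _ => this i, ← _root_.map_sum T _ _, b.sum_equivFun]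
    set G : ℕ → 𝒮 → (E →L[ℝ] ℝ) := fun k s =>
      ∑ i : Fin d, (((k:ℝ)+1) * (f (z + ((k:ℝ)+1)⁻¹ • b i) s - f z s)) • ci i with hG
    have hGmeas : ∀ k, AEStronglyMeasurable (G k) μ := by
      intro k
      refine (Finset.stronglyMeasurable_fun_sum Finset.univ fun i _ => ?_).aestronglyMeasurable
      exact (((hfmeas _).sub (hfmeas z)).const_mul ((k:ℝ)+1)).stronglyMeasurable.smul_const (ci i)
    have hGlim : ∀ᵐ s ∂μ, Tendsto (fun k => G k s) atTop (𝓝 (fderiv ℝ (fun x => f x s) z)) := by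
      filter_upwards [hfdiff] with s hs
      rw [hrep (fderiv ℝ (fun x => f x s) z)]
      apply tendsto_finset_sum
      intro i _
      apply Tendsto.smul_const
      have hdir := dir_tendsto (hs z).hasFDerivAt (b i)
      have hseq : Tendsto (fun k : ℕ => ((k:ℝ)+1)⁻¹) atTop (𝓝[>] (0:ℝ)) := by
        apply tendsto_nhdsWithin_of_tendsto_nhds_of_eventually_within
        · have := tendsto_one_div_add_atTop_nhds_zero_nat (𝕜 := ℝ)
          simpa [one_div] using this
        · exact Eventually.of_forall fun k => Set.mem_Ioi.mpr (by positivity)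
      have hcomp := hdir.comp hseq
      refine hcomp.congr fun k => ?_
      simp only [Function.comp]
      rw [div_inv_eq_mul, mul_comm]
      
    exact aestronglyMeasurable_of_tendsto_ae atTop hGmeas hGlim
  have h_diff : ∀ᵐ s ∂μ, HasFDerivAt (fun x => f x s) (fderiv ℝ (fun x => f x s) z) z :=
    hfdiff.mono fun s hs => (hs z).hasFDerivAt
  have main := hasFDerivAt_integral_of_dominated_loc_of_lip (μ := μ) (s := ball z 1) (ball_mem_nhds z one_pos)
    (Eventually.of_forall fun x => (hfmeas x).aestronglyMeasurable)
    (hfint z) hF'_meas h_lip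
    (((hfint z).abs.add hDint).const_mul 2) h_diff
  rw [hFeq]
  exact main.2.differentiableAt

end Diff

/-- Localization lemma for norm-regularized ERM (Lemma 3.2).
`x̂_λ` is a (sample-dependent) minimizer of `F̄ + λ‖·‖`, and `x*_{λ/3}`, `x*_{3λ}`
are minimizers of `F + (λ/3)‖·‖` and `F + 3λ‖·‖`.  If for both `ζ ∈ {λ/3, 3λ}`,
`P(‖∇F̄(x*_ζ) - ∇F(x*_ζ)‖_* > λ/2) ≤ δ`, then
`P(‖x*_{3λ}‖ ≤ 3‖x̂_λ‖ ≤ 33‖x*_{λ/3}‖) ≥ 1 - 2δ`.  (The dual norm of the gradient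
is formalized as the operator norm of the Fréchet derivative.) -/
theorem stmt4
    {E : Type*} [NormedAddCommGroup E] [NormedSpace ℝ E] [FiniteDimensional ℝ E]
    {𝒮 : Type*} [MeasurableSpace 𝒮] (μsamp : Measure 𝒮) [IsProbabilityMeasure μsamp]
    {Ω : Type*} [MeasureSpace Ω] [IsProbabilityMeasure (ℙ : Measure Ω)]
    (f : E → 𝒮 → ℝ)
    (hfmeas : ∀ x, Measurable (f x))
    (hfconv : ∀ᵐ s ∂μsamp, ConvexOn ℝ Set.univ fun x => f x s)
    (hfdiff : ∀ᵐ s ∂μsamp, Differentiable ℝ fun x => f x s)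
    (hfint : ∀ x, Integrable (f x) μsamp)
    (n : ℕ) (hn : 0 < n)
    (S : Fin n → Ω → 𝒮)
    (hSmeas : ∀ i, Measurable (S i))
    (hSlaw : ∀ i, Measure.map (S i) ℙ = μsamp)
    (hSindep : iIndepFun S ℙ)
    (F : E → ℝ) (hF : ∀ x, F x = ∫ s, f x s ∂μsamp)
    (Fbar : Ω → E → ℝ) (hFbar : ∀ ω x, Fbar ω x = (∑ i, f x (S i ω)) / n)
    (lam δ : ℝ) (hlam : 0 < lam) (hδ : δ ∈ Set.Ioo (0 : ℝ) 1)
    (xhat : Ω → E)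
    (hxhat : ∀ ω, ∀ y, Fbar ω (xhat ω) + lam * ‖xhat ω‖ ≤ Fbar ω y + lam * ‖y‖)
    (xstarThird : E)
    (hxstarThird : ∀ y, F xstarThird + lam / 3 * ‖xstarThird‖ ≤ F y + lam / 3 * ‖y‖)
    (xstarTriple : E)
    (hxstarTriple : ∀ y, F xstarTriple + 3 * lam * ‖xstarTriple‖ ≤ F y + 3 * lam * ‖y‖)
    (hconc : ∀ z ∈ ({xstarThird, xstarTriple} : Set E),
      ℙ {ω | lam / 2 < ‖fderiv ℝ (Fbar ω) z - fderiv ℝ F z‖} ≤ ENNReal.ofReal δ) :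
    ENNReal.ofReal (1 - 2 * δ) ≤
      ℙ {ω | ‖xstarTriple‖ ≤ 3 * ‖xhat ω‖ ∧ 3 * ‖xhat ω‖ ≤ 33 * ‖xstarThird‖} := by
  classical
  have mem1 : xstarThird ∈ ({xstarThird, xstarTriple} : Set E) := Set.mem_insert _ _
  have mem2 : xstarTriple ∈ ({xstarThird, xstarTriple} : Set E) :=
    Set.mem_insert_of_mem _ rfl
  have hd3 : DifferentiableAt ℝ F xstarThird :=
    F_diffAt μsamp f hfmeas hfconv hfdiff hfint F hF xstarThird
  have hdT : DifferentiableAt ℝ F xstarTriple :=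
    F_diffAt μsamp f hfmeas hfconv hfdiff hfint F hF xstarTriple
  have hL3 : HasFDerivAt F (fderiv ℝ F xstarThird) xstarThird := hd3.hasFDerivAt
  have hLT : HasFDerivAt F (fderiv ℝ F xstarTriple) xstarTriple := hdT.hasFDerivAt
  have hLv3 : ∀ v, |fderiv ℝ F xstarThird v| ≤ lam / 3 * ‖v‖ :=
    fun v => opt_grad_abs (by positivity) hL3 hxstarThird v
  have hLvT : ∀ v, |fderiv ℝ F xstarTriple v| ≤ 3 * lam * ‖v‖ :=
    fun v => opt_grad_abs (by positivity) hLT hxstarTriple v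
  have hLzT : fderiv ℝ F xstarTriple xstarTriple ≤ -(3 * lam * ‖xstarTriple‖) :=
    opt_grad_self (by positivity) hLT hxstarTriple
  have hreg : ∀ᵐ ω, ∀ i, ConvexOn ℝ Set.univ (fun x => f x (S i ω)) ∧
      Differentiable ℝ (fun x => f x (S i ω)) := by
    rw [ae_all_iff]
    intro i
    refine ae_of_ae_map (μ := (ℙ : Measure Ω)) (hSmeas i).aemeasurable
      (p := fun s => ConvexOn ℝ Set.univ (fun x => f x s) ∧
        Differentiable ℝ (fun x => f x s)) ?_
    rw [hSlaw i]
    exact hfconv.and hfdiff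
  set Bad1 := {ω | lam / 2 < ‖fderiv ℝ (Fbar ω) xstarThird - fderiv ℝ F xstarThird‖} with hBad1
  set Bad2 := {ω | lam / 2 < ‖fderiv ℝ (Fbar ω) xstarTriple - fderiv ℝ F xstarTriple‖} with hBad2
  set N := {ω | ¬ ∀ i, ConvexOn ℝ Set.univ (fun x => f x (S i ω)) ∧
      Differentiable ℝ (fun x => f x (S i ω))} with hNdef
  have hN : ℙ N = 0 := ae_iff.1 hreg
  set B := {ω | ‖xstarTriple‖ ≤ 3 * ‖xhat ω‖ ∧ 3 * ‖xhat ω‖ ≤ 33 * ‖xstarThird‖} with hBdef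
  have hsub : Bᶜ ⊆ Bad1 ∪ Bad2 ∪ N := by
    intro ω hω
    by_contra hcon
    simp only [Set.mem_union, not_or] at hcon
    obtain ⟨⟨hg1, hg2⟩, hg3⟩ := hcon
    apply hω
    have hregω : ∀ i, ConvexOn ℝ Set.univ (fun x => f x (S i ω)) ∧
        Differentiable ℝ (fun x => f x (S i ω)) := not_not.1 hg3
    have hFbeq : Fbar ω = fun x => (∑ i, f x (S i ω)) / n := funext (hFbar ω)
    have hFbconv : ConvexOn ℝ Set.univ (Fbar ω) := by
      rw [hFbeq]
      have h0 := ConvexOn.smul (c := ((n:ℝ))⁻¹) (by positivity)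
        (convexOn_finsum Finset.univ (fun i x => f x (S i ω)) (fun i _ => (hregω i).1))
      have heq : (fun x => ((n:ℝ))⁻¹ • ∑ i, f x (S i ω)) = fun x => (∑ i, f x (S i ω)) / n :=
        funext fun x => by rw [smul_eq_mul, inv_mul_eq_div]
      rwa [heq] at h0
    have hFbdiff : Differentiable ℝ (Fbar ω) := by
      rw [hFbeq]
      have hds := (Differentiable.fun_sum (u := Finset.univ)
        (A := fun i x => f x (S i ω)) (fun i _ => (hregω i).2)).const_mul ((n:ℝ)⁻¹)
      have heq2 : (fun x => ((n:ℝ))⁻¹ * ∑ i, f x (S i ω)) = fun x => (∑ i, f x (S i ω)) / n :=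
        funext fun x => by rw [inv_mul_eq_div]
      rwa [heq2] at hds
    have hDb3 : HasFDerivAt (Fbar ω) (fderiv ℝ (Fbar ω) xstarThird) xstarThird :=
      (hFbdiff xstarThird).hasFDerivAt
    have hDbT : HasFDerivAt (Fbar ω) (fderiv ℝ (Fbar ω) xstarTriple) xstarTriple :=
      (hFbdiff xstarTriple).hasFDerivAt
    have hd1 : ‖fderiv ℝ (Fbar ω) xstarThird - fderiv ℝ F xstarThird‖ ≤ lam / 2 :=
      le_of_not_gt hg1
    have hd2 : ‖fderiv ℝ (Fbar ω) xstarTriple - fderiv ℝ F xstarTriple‖ ≤ lam / 2 :=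
      le_of_not_gt hg2
    have hup := det_upper hlam hFbconv hDb3 (hxhat ω) hLv3 hd1
    have hlo := det_lower hlam hFbconv hDbT (hxhat ω) hLvT hLzT hd2
    exact ⟨by linarith, by linarith⟩
  have hBc : ℙ Bᶜ ≤ ENNReal.ofReal (2 * δ) := by
    calc ℙ Bᶜ ≤ ℙ (Bad1 ∪ Bad2 ∪ N) := measure_mono hsub
    _ ≤ ℙ (Bad1 ∪ Bad2) + ℙ N := measure_union_le _ _
    _ = ℙ (Bad1 ∪ Bad2) := by rw [hN, add_zero]
    _ ≤ ℙ Bad1 + ℙ Bad2 := measure_union_le _ _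
    _ ≤ ENNReal.ofReal δ + ENNReal.ofReal δ := add_le_add (hconc _ mem1) (hconc _ mem2)
    _ = ENNReal.ofReal (2 * δ) := by
        rw [← ENNReal.ofReal_add hδ.1.le hδ.1.le]
        norm_num [two_mul]
  have hone : (1:ℝ≥0∞) ≤ ℙ B + ℙ Bᶜ := by
    have h := measure_union_le (μ := (ℙ : Measure Ω)) B Bᶜ
    rw [Set.union_compl_self] at h
    simpa using h
  calc ENNReal.ofReal (1 - 2 * δ)
      = ENNReal.ofReal 1 - ENNReal.ofReal (2 * δ) := ENNReal.ofReal_sub _ (by nlinarith [hδ.1])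
    _ = 1 - ENNReal.ofReal (2 * δ) := by rw [ENNReal.ofReal_one]
    _ ≤ 1 - ℙ Bᶜ := tsub_le_tsub_left hBc 1
    _ ≤ ℙ B := tsub_le_iff_right.2 hone
end

section
/- Let G, Ḡ : ℝ^d → ℝ be convex and differentiable, λ > 0, x̂ ∈ argmin_{x ∈ ℝ^d} { Ḡ(x) + λ‖x‖ }, and x* ∈ argmin_{x ∈ ℝ^d} { G(x) + (λ/3)‖x‖ }, both assumed to exist. If ‖∇Ḡ(x*) − ∇G(x*)‖_* ≤ λ/2, then ‖x̂‖ ≤ 11‖x*‖. -/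
open Filter Topology

/-- Tangent line inequality for convex differentiable functions. -/
lemma tangent_le
    {E : Type*} [NormedAddCommGroup E] [NormedSpace ℝ E]
    {f : E → ℝ} (hc : ConvexOn ℝ Set.univ f) (hd : Differentiable ℝ f)
    (x y : E) : f x + fderiv ℝ f x (y - x) ≤ f y := by
  set g : ℝ → ℝ := fun t => f (x + t • (y - x)) with hg
  have hcurve : ∀ t : ℝ, HasDerivAt (fun s : ℝ => x + s • (y - x)) (y - x) t := by
    intro t
    simpa using ((hasDerivAt_id t).smul_const (y - x)).const_add x
  have hgd : HasDerivAt g (fderiv ℝ f x (y - x)) 0 := by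
    have h := ((hd (x + (0:ℝ) • (y - x))).hasFDerivAt).comp_hasDerivAt 0 (hcurve 0)
    simp at h ⊢
    exact h
  have hgc : ConvexOn ℝ Set.univ g := by
    have := hc.comp_affineMap (AffineMap.lineMap x y : ℝ →ᵃ[ℝ] E)
    have heq : (f ∘ (AffineMap.lineMap x y : ℝ →ᵃ[ℝ] E)) = g := by
      funext t
      simp [g, AffineMap.lineMap_apply, vsub_eq_sub, vadd_eq_add, add_comm, smul_sub]
    rw [heq, Set.preimage_univ] at this
    exact this
  have hs := hgc.le_slope_of_hasDerivAt (Set.mem_univ (0:ℝ)) (Set.mem_univ (1:ℝ))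
    one_pos hgd
  have hslope : slope g 0 1 = f y - f x := by
    simp [slope_def_field, g]
  rw [hslope] at hs
  linarith

/-- At a minimizer of `f + c‖·‖`, the gradient has operator norm `≤ c`. -/
lemma grad_norm_le
    {E : Type*} [NormedAddCommGroup E] [NormedSpace ℝ E]
    {f : E → ℝ} (hd : Differentiable ℝ f)
    {c : ℝ} (hc : 0 ≤ c) {x : E}
    (hmin : ∀ y, f x + c * ‖x‖ ≤ f y + c * ‖y‖) :
    ‖fderiv ℝ f x‖ ≤ c := by
  have key : ∀ v : E, -(c * ‖v‖) ≤ fderiv ℝ f x v := by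
    intro v
    set g : ℝ → ℝ := fun t => f (x + t • v) with hgdef
    have hgd : HasDerivAt g (fderiv ℝ f x v) 0 := by
      have hcurve : HasDerivAt (fun s : ℝ => x + s • v) v 0 := by
        simpa using ((hasDerivAt_id (0:ℝ)).smul_const v).const_add x
      have h := ((hd (x + (0:ℝ) • v)).hasFDerivAt).comp_hasDerivAt 0 hcurve
      simp at h ⊢
      exact h
    have htend : Tendsto (slope g 0) (𝓝[>] (0:ℝ)) (𝓝 (fderiv ℝ f x v)) :=
      (hasDerivAt_iff_tendsto_slope.mp hgd).mono_left
        (nhdsWithin_mono _ fun t ht => ne_of_gt ht)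
    refine ge_of_tendsto htend ?_
    filter_upwards [self_mem_nhdsWithin] with t ht
    have ht0 : (0:ℝ) < t := ht
    have h1 : f x + c * ‖x‖ ≤ f (x + t • v) + c * ‖x + t • v‖ := hmin _
    have h2 : ‖x + t • v‖ ≤ ‖x‖ + t * ‖v‖ := by
      calc ‖x + t • v‖ ≤ ‖x‖ + ‖t • v‖ := norm_add_le _ _
        _ = ‖x‖ + t * ‖v‖ := by rw [norm_smul, Real.norm_of_nonneg ht0.le]
    have h3 : g t - g 0 ≥ -(c * (t * ‖v‖)) := by
      have : c * ‖x + t • v‖ ≤ c * (‖x‖ + t * ‖v‖) := by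
        exact mul_le_mul_of_nonneg_left h2 hc
      simp only [hgdef, zero_smul, add_zero]
      nlinarith
    have hslope : slope g 0 t = (g t - g 0) / t := by
      simp [slope_def_field]
    rw [hslope, le_div_iff₀ ht0]
    nlinarith
  refine ContinuousLinearMap.opNorm_le_bound _ hc ?_
  intro v
  rw [Real.norm_eq_abs, abs_le]
  constructor
  · linarith [key v]
  · have := key (-v)
    simp only [map_neg, norm_neg] at this
    linarith

/-- Deterministic localization upper bound (part of the proof of
Lemma 3.2).  `G, Ḡ : E → ℝ` convex and differentiable, `λ > 0`,
`x̂ ∈ argmin (Ḡ + λ‖·‖)`, `x* ∈ argmin (G + (λ/3)‖·‖)`.  If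
`‖∇Ḡ(x*) - ∇G(x*)‖_* ≤ λ/2` then `‖x̂‖ ≤ 11‖x*‖`.  (The dual norm of the
gradient is the operator norm of the Fréchet derivative.) -/
theorem stmt5
    {E : Type*} [NormedAddCommGroup E] [NormedSpace ℝ E] [FiniteDimensional ℝ E]
    (G Gbar : E → ℝ)
    (hGconv : ConvexOn ℝ Set.univ G) (hGbarconv : ConvexOn ℝ Set.univ Gbar)
    (hGdiff : Differentiable ℝ G) (hGbardiff : Differentiable ℝ Gbar)
    (lam : ℝ) (hlam : 0 < lam)
    (xhat : E) (hxhat : ∀ y, Gbar xhat + lam * ‖xhat‖ ≤ Gbar y + lam * ‖y‖)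
    (xstar : E) (hxstar : ∀ y, G xstar + lam / 3 * ‖xstar‖ ≤ G y + lam / 3 * ‖y‖)
    (hgrad : ‖fderiv ℝ Gbar xstar - fderiv ℝ G xstar‖ ≤ lam / 2) :
    ‖xhat‖ ≤ 11 * ‖xstar‖ := by
  have hG3 : ‖fderiv ℝ G xstar‖ ≤ lam / 3 :=
    grad_norm_le hGdiff (by linarith) hxstar
  have hpsi : ‖fderiv ℝ Gbar xstar‖ ≤ 5 * lam / 6 := by
    calc ‖fderiv ℝ Gbar xstar‖
        = ‖(fderiv ℝ Gbar xstar - fderiv ℝ G xstar) + fderiv ℝ G xstar‖ := by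
          rw [sub_add_cancel]
      _ ≤ ‖fderiv ℝ Gbar xstar - fderiv ℝ G xstar‖ + ‖fderiv ℝ G xstar‖ :=
          norm_add_le _ _
      _ ≤ lam / 2 + lam / 3 := add_le_add hgrad hG3
      _ = 5 * lam / 6 := by ring
  have htan : Gbar xstar + fderiv ℝ Gbar xstar (xhat - xstar) ≤ Gbar xhat :=
    tangent_le hGbarconv hGbardiff xstar xhat
  have hopt : Gbar xhat + lam * ‖xhat‖ ≤ Gbar xstar + lam * ‖xstar‖ := hxhat xstar
  have hbound : |fderiv ℝ Gbar xstar (xhat - xstar)| ≤ 5 * lam / 6 * (‖xhat‖ + ‖xstar‖) := by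
    calc |fderiv ℝ Gbar xstar (xhat - xstar)|
        ≤ ‖fderiv ℝ Gbar xstar‖ * ‖xhat - xstar‖ := by
          simpa using (fderiv ℝ Gbar xstar).le_opNorm (xhat - xstar)
      _ ≤ 5 * lam / 6 * (‖xhat‖ + ‖xstar‖) := by
          apply mul_le_mul hpsi (norm_sub_le _ _) (norm_nonneg _) (by positivity)
  have habs := abs_le.mp hbound
  have : lam * ‖xhat‖ ≤ lam * ‖xstar‖ + 5 * lam / 6 * (‖xhat‖ + ‖xstar‖) := by
    linarith
  nlinarith [norm_nonneg xhat, norm_nonneg xstar]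
end

section
/- Let G, Ḡ : ℝ^d → ℝ be convex and differentiable, λ > 0, x̂ ∈ argmin_{x ∈ ℝ^d} { Ḡ(x) + λ‖x‖ }, and x* ∈ argmin_{x ∈ ℝ^d} { G(x) + 3λ‖x‖ }, both assumed to exist. If ‖∇Ḡ(x*) − ∇G(x*)‖_* ≤ λ/2, then ‖x*‖ ≤ 3‖x̂‖. -/
/-!
Both minimisers satisfy the first-order optimality condition for a smooth convex function plus a
multiple of the norm. Testing them against each other along `v = x̂ - x*`: the gradient
inequality for `Ḡ` and the optimality of `x̂` give `∇Ḡ(x*)·v ≤ λ(‖x*‖ - ‖x̂‖)`, while the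
optimality of `x*` gives `3λ(‖x*‖ - ‖x̂‖) ≤ ∇G(x*)·v`. The two gradients differ on `v` by at
most `λ/2 · ‖v‖ ≤ λ/2 · (‖x̂‖ + ‖x*‖)`, whence `3‖x*‖ ≤ 5‖x̂‖`.
-/

open Set

section

variable {E : Type*} [NormedAddCommGroup E] [NormedSpace ℝ E]

theorem ConvexOn.sub_le_fderiv_apply_sub_of_forall_add_le {F g : E → ℝ} {x : E}
    (hg : ConvexOn ℝ univ g) (hF : DifferentiableAt ℝ F x)
    (hmin : ∀ y, F x + g x ≤ F y + g y) (y : E) :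
    g x - g y ≤ fderiv ℝ F x (y - x) := by
  set φ : ℝ → ℝ := fun t => F (AffineMap.lineMap x y t) + t * (g y - g x)
  have hφ : HasDerivAt φ (fderiv ℝ F x (y - x) + (g y - g x)) 0 := by
    have hF' : HasFDerivAt F (fderiv ℝ F x) (AffineMap.lineMap x y (0 : ℝ)) := by
      simpa using hF.hasFDerivAt
    have h := (hF'.comp_hasDerivAt 0 AffineMap.hasDerivAt_lineMap).add
      ((hasDerivAt_id 0).mul_const (g y - g x))
    rw [one_mul] at h
    exact h
  -- Convexity of `g` along the segment turns `x ∈ argmin (F + g)` into `0 ∈ argmin φ` on `[0, 1]`.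
  have hφmin : IsMinOn φ (Icc 0 1) 0 := by
    intro t ⟨ht0, ht1⟩
    have hconv : g (AffineMap.lineMap x y t) ≤ (1 - t) * g x + t * g y := by
      simpa [AffineMap.lineMap_apply_module] using
        hg.2 (mem_univ x) (mem_univ y) (by linarith : 0 ≤ 1 - t) ht0 (by ring)
    have := hmin (AffineMap.lineMap x y t)
    show φ 0 ≤ φ t
    simp only [φ, AffineMap.lineMap_apply_zero, zero_mul, add_zero]
    linarith
  have hone : (1 : ℝ) ∈ posTangentConeAt (Icc 0 1) 0 :=
    mem_posTangentConeAt_of_segment_subset (by simp [segment_eq_Icc])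
  have := hφmin.localize.hasFDerivWithinAt_nonneg hφ.hasFDerivAt.hasFDerivWithinAt hone
  simp only [ContinuousLinearMap.toSpanSingleton_apply, smul_eq_mul, one_mul] at this
  linarith

theorem ConvexOn.fderiv_apply_sub_le {F : E → ℝ} {x : E} (hF : ConvexOn ℝ univ F)
    (hd : DifferentiableAt ℝ F x) (y : E) :
    fderiv ℝ F x (y - x) ≤ F y - F x := by
  -- `x` minimises `-F + F = 0`.
  have := hF.sub_le_fderiv_apply_sub_of_forall_add_le hd.neg (fun _ => by simp) y
  rw [fderiv_neg, neg_apply] at this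
  linarith

end

theorem stmt6_general
    {E : Type*} [NormedAddCommGroup E] [NormedSpace ℝ E]
    (G Gbar : E → ℝ)
    (hGbarconv : ConvexOn ℝ Set.univ Gbar)
    (hGdiff : Differentiable ℝ G) (hGbardiff : Differentiable ℝ Gbar)
    (lam : ℝ) (hlam : 0 < lam)
    (xhat : E) (hxhat : ∀ y, Gbar xhat + lam * ‖xhat‖ ≤ Gbar y + lam * ‖y‖)
    (xstar : E) (hxstar : ∀ y, G xstar + 3 * lam * ‖xstar‖ ≤ G y + 3 * lam * ‖y‖)
    (hgrad : ‖fderiv ℝ Gbar xstar - fderiv ℝ G xstar‖ ≤ lam / 2) :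
    ‖xstar‖ ≤ 3 * ‖xhat‖ := by
  set v := xhat - xstar
  have hGbar : fderiv ℝ Gbar xstar v ≤ lam * ‖xstar‖ - lam * ‖xhat‖ := by
    linarith [hGbarconv.fderiv_apply_sub_le (hGbardiff xstar) xhat, hxhat xstar]
  have hG : 3 * lam * ‖xstar‖ - 3 * lam * ‖xhat‖ ≤ fderiv ℝ G xstar v :=
    ((convexOn_norm convex_univ).smul (by positivity : 0 ≤ 3 * lam))
      |>.sub_le_fderiv_apply_sub_of_forall_add_le (hGdiff xstar) hxstar xhat
  have hdiff : fderiv ℝ G xstar v - fderiv ℝ Gbar xstar v ≤ lam / 2 * (‖xhat‖ + ‖xstar‖) :=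
    calc fderiv ℝ G xstar v - fderiv ℝ Gbar xstar v
        ≤ ‖(fderiv ℝ Gbar xstar - fderiv ℝ G xstar) v‖ := by
          rw [sub_apply, norm_sub_rev]; exact Real.le_norm_self _
      _ ≤ lam / 2 * ‖v‖ := ContinuousLinearMap.le_of_opNorm_le _ hgrad v
      _ ≤ lam / 2 * (‖xhat‖ + ‖xstar‖) := by gcongr; exact norm_sub_le _ _
  have key : lam * (3 * ‖xstar‖) ≤ lam * (5 * ‖xhat‖) := by linarith
  linarith [le_of_mul_le_mul_left key hlam, norm_nonneg xhat]

/-- Deterministic localization lower bound (part of the proof of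
Lemma 3.2).  `G, Ḡ : E → ℝ` convex and differentiable, `λ > 0`,
`x̂ ∈ argmin (Ḡ + λ‖·‖)`, `x* ∈ argmin (G + 3λ‖·‖)`.  If
`‖∇Ḡ(x*) - ∇G(x*)‖_* ≤ λ/2` then `‖x*‖ ≤ 3‖x̂‖`.  (The dual norm of the
gradient is the operator norm of the Fréchet derivative.) -/
theorem stmt6
    {E : Type*} [NormedAddCommGroup E] [NormedSpace ℝ E] [FiniteDimensional ℝ E]
    (G Gbar : E → ℝ)
    (hGconv : ConvexOn ℝ Set.univ G) (hGbarconv : ConvexOn ℝ Set.univ Gbar)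
    (hGdiff : Differentiable ℝ G) (hGbardiff : Differentiable ℝ Gbar)
    (lam : ℝ) (hlam : 0 < lam)
    (xhat : E) (hxhat : ∀ y, Gbar xhat + lam * ‖xhat‖ ≤ Gbar y + lam * ‖y‖)
    (xstar : E) (hxstar : ∀ y, G xstar + 3 * lam * ‖xstar‖ ≤ G y + 3 * lam * ‖y‖)
    (hgrad : ‖fderiv ℝ Gbar xstar - fderiv ℝ G xstar‖ ≤ lam / 2) :
    ‖xstar‖ ≤ 3 * ‖xhat‖ :=
  stmt6_general G Gbar hGbarconv hGdiff hGbardiff lam hlam xhat hxhat xstar hxstar hgrad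
end

section
/- Let n ≥ 2 and let Z_1, …, Z_n be i.i.d. random variables with values in [0, H] almost surely, for a constant H > 0. Then for every δ ∈ (0,1), with probability at least 1 − δ: E[Z_1] ≤ (2/n) Σ_{i=1}^n Z_i + 13 H ln(2/δ) / (3(n − 1)). -/
open MeasureTheory ProbabilityTheory

lemma stmt15_exp_aux {H z : ℝ} (hH : 0 < H) (h0 : 0 ≤ z) (hz : z ≤ H) :
    Real.exp (-(1 / H) * z) ≤ 1 - z / (2 * H) := by
  have hu0 : 0 ≤ z / H := div_nonneg h0 hH.le
  have hu1 : z / H ≤ 1 := (div_le_one hH).2 hz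
  have hexp : 1 + z / H ≤ Real.exp (z / H) := by
    linarith [Real.add_one_le_exp (z / H)]
  have heq : -(1 / H) * z = -(z / H) := by field_simp
  rw [heq, Real.exp_neg]
  have hpos : (0 : ℝ) < 1 + z / H := by linarith
  have h1 : (Real.exp (z / H))⁻¹ ≤ (1 + z / H)⁻¹ := by
    apply inv_anti₀ hpos hexp
  refine h1.trans ?_
  rw [inv_le_iff_one_le_mul₀ hpos]
  have hzH : z / (2 * H) = (z / H) / 2 := by ring
  rw [hzH]
  nlinarith [hu0, hu1]

/-- Empirical Bennett bound without variance (Lemma B.2).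
For `n ≥ 2` i.i.d. random variables `Z 1, …, Z n` with values in `[0, H]` almost
surely, for every `δ ∈ (0,1)`, with probability at least `1 - δ`:
`E[Z 1] ≤ (2/n) Σᵢ Z i + 13 H ln(2/δ) / (3(n-1))`. -/
theorem stmt15
    {n : ℕ} (hn : 2 ≤ n)
    {Ω : Type*} [MeasureSpace Ω] [IsProbabilityMeasure (ℙ : Measure Ω)]
    (Z : Fin n → Ω → ℝ)
    (hmeas : ∀ i, Measurable (Z i))
    (hident : ∀ i j, Measure.map (Z i) ℙ = Measure.map (Z j) ℙ)
    (hindep : iIndepFun Z ℙ)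
    (H : ℝ) (hH : 0 < H)
    (hbound : ∀ i, ∀ᵐ ω ∂ℙ, Z i ω ∈ Set.Icc 0 H)
    (δ : ℝ) (hδ : δ ∈ Set.Ioo (0 : ℝ) 1) :
    ENNReal.ofReal (1 - δ) ≤
      ℙ {ω | (∫ ω', Z ⟨0, by omega⟩ ω' ∂ℙ) ≤
        2 / n * ∑ i, Z i ω + 13 * H * Real.log (2 / δ) / (3 * (n - 1))} := by
  obtain ⟨hδ0, hδ1⟩ := hδ
  have hn1 : (1 : ℝ) ≤ (n : ℝ) - 1 := by
    have : (2 : ℝ) ≤ (n : ℝ) := by exact_mod_cast hn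
    linarith
  have hnpos : (0 : ℝ) < (n : ℝ) := by linarith
  set i0 : Fin n := ⟨0, by omega⟩ with hi0
  set μ0 : ℝ := ∫ ω', Z i0 ω' ∂ℙ with hμ0def
  set L : ℝ := Real.log (2 / δ) with hLdef
  have hLpos : 0 < L := by
    apply Real.log_pos
    rw [lt_div_iff₀ hδ0]; linarith
  set c : ℝ := 13 * H * L / (3 * ((n : ℝ) - 1)) with hcdef
  have hcpos : 0 < c := by
    apply div_pos (by positivity) (by linarith)
  -- integrability of Z i
  have hZint : ∀ i, Integrable (Z i) ℙ := by
    intro i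
    refine (integrable_const H).mono' (hmeas i).aestronglyMeasurable ?_
    filter_upwards [hbound i] with ω hω
    rw [Real.norm_eq_abs, abs_of_nonneg hω.1]; exact hω.2
  -- all integrals equal μ0
  have hint_eq : ∀ i, ∫ ω', Z i ω' ∂ℙ = μ0 := by
    intro i
    have h1 : ∫ ω', Z i ω' ∂ℙ = ∫ x, x ∂(Measure.map (Z i) ℙ) :=
      (integral_map (f := fun x => x) (hmeas i).aemeasurable
        measurable_id.aestronglyMeasurable).symm
    have h2 : ∫ ω', Z i0 ω' ∂ℙ = ∫ x, x ∂(Measure.map (Z i0) ℙ) :=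
      (integral_map (f := fun x => x) (hmeas i0).aemeasurable
        measurable_id.aestronglyMeasurable).symm
    rw [hμ0def, h1, h2, hident i i0]
  have hμ0_nonneg : 0 ≤ μ0 := by
    rw [hμ0def]
    apply integral_nonneg_of_ae
    filter_upwards [hbound i0] with ω hω using hω.1
  have hμ0_le : μ0 ≤ H := by
    rw [hμ0def]
    calc ∫ ω', Z i0 ω' ∂ℙ ≤ ∫ _, H ∂ℙ := by
          apply integral_mono_ae (hZint i0) (integrable_const H)
          filter_upwards [hbound i0] with ω hω using hω.2
      _ = H := by simp
  set t : ℝ := -(1 / H) with htdef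
  have ht_nonpos : t ≤ 0 := by
    rw [htdef]; simp only [neg_nonpos]; positivity
  -- mgf bound for each i
  have hmgf_le : ∀ i, mgf (Z i) ℙ t ≤ 1 - μ0 / (2 * H) := by
    intro i
    have hint_exp : Integrable (fun ω => Real.exp (t * Z i ω)) ℙ := by
      refine (integrable_const (1 : ℝ)).mono'
        (((hmeas i).const_mul t).exp.aestronglyMeasurable) ?_
      filter_upwards [hbound i] with ω hω
      rw [Real.norm_eq_abs, abs_of_nonneg (Real.exp_pos _).le, Real.exp_le_one_iff]
      have h1 := hω.1
      rw [htdef]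
      have h2 : 0 ≤ 1 / H * Z i ω := mul_nonneg (by positivity) h1
      linarith
    have h2 : Integrable (fun ω => 1 - Z i ω / (2 * H)) ℙ := by
      exact (integrable_const (1 : ℝ)).sub ((hZint i).div_const _)
    calc mgf (Z i) ℙ t = ∫ ω, Real.exp (t * Z i ω) ∂ℙ := rfl
      _ ≤ ∫ ω, (1 - Z i ω / (2 * H)) ∂ℙ := by
          apply integral_mono_ae hint_exp h2
          filter_upwards [hbound i] with ω hω
          have := stmt15_exp_aux hH hω.1 hω.2
          rw [htdef]
          exact this
      _ = 1 - μ0 / (2 * H) := by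
          rw [integral_sub (integrable_const 1) ((hZint i).div_const _)]
          simp [integral_div, hint_eq i]
  have hfac_nonneg : 0 ≤ 1 - μ0 / (2 * H) := by
    have : μ0 / (2 * H) ≤ 1 / 2 := by
      rw [div_le_div_iff₀ (by linarith) (by norm_num)]
      linarith
    linarith
  -- mgf of sum
  have hint_exp_all : ∀ i, Integrable (fun ω => Real.exp (t * Z i ω)) ℙ := by
    intro i
    refine (integrable_const (1 : ℝ)).mono'
      (((hmeas i).const_mul t).exp.aestronglyMeasurable) ?_
    filter_upwards [hbound i] with ω hω
    rw [Real.norm_eq_abs, abs_of_nonneg (Real.exp_pos _).le, Real.exp_le_one_iff]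
    have h1 := hω.1
    rw [htdef]
    have h2 : 0 ≤ 1 / H * Z i ω := mul_nonneg (by positivity) h1
    linarith
  have hS_int : Integrable (fun ω => Real.exp (t * (∑ i, Z i) ω)) ℙ :=
    hindep.integrable_exp_mul_sum hmeas (fun i _ => hint_exp_all i)
  have hmgf_sum : mgf (∑ i, Z i) ℙ t = ∏ i, mgf (Z i) ℙ t :=
    hindep.mgf_sum hmeas Finset.univ
  have hmgf_sum_le : mgf (∑ i, Z i) ℙ t ≤ (1 - μ0 / (2 * H)) ^ n := by
    rw [hmgf_sum]
    calc ∏ i, mgf (Z i) ℙ t ≤ ∏ _i : Fin n, (1 - μ0 / (2 * H)) :=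
          Finset.prod_le_prod (fun i _ => mgf_nonneg) (fun i _ => hmgf_le i)
      _ = (1 - μ0 / (2 * H)) ^ n := by simp
  -- Chernoff bound
  set ε : ℝ := (n : ℝ) * (μ0 - c) / 2 with hεdef
  have chern := measure_le_le_exp_mul_mgf (μ := ℙ) (X := ∑ i, Z i) ε ht_nonpos hS_int
  have hkey : (ℙ {ω | (∑ i, Z i) ω ≤ ε}).toReal ≤ δ := by
    refine chern.trans ?_
    have h1 : Real.exp (-t * ε) * mgf (∑ i, Z i) ℙ t ≤
        Real.exp (-t * ε) * (Real.exp (-(μ0 / (2 * H)))) ^ n := by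
      apply mul_le_mul_of_nonneg_left _ (Real.exp_pos _).le
      refine hmgf_sum_le.trans ?_
      apply pow_le_pow_left₀ hfac_nonneg
      have := Real.add_one_le_exp (-(μ0 / (2 * H)))
      linarith
    refine h1.trans ?_
    rw [← Real.exp_nat_mul, ← Real.exp_add]
    have hδeq : δ = Real.exp (Real.log δ) := (Real.exp_log hδ0).symm
    rw [hδeq]
    apply Real.exp_le_exp.2
    -- -t * ε + n * (-(μ0/(2H))) = n(μ0-c)/(2H) - nμ0/(2H) = -nc/(2H) ≤ log δ
    have harith : -t * ε + (n : ℝ) * (-(μ0 / (2 * H))) = -((n : ℝ) * c) / (2 * H) := by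
      rw [htdef, hεdef]
      field_simp
      ring
    rw [harith]
    -- need -(n c)/(2H) ≤ log δ, i.e. -log δ ≤ n c/(2H) = 13 n L /(6(n-1))
    have hlogδ : Real.log δ = Real.log 2 - L := by
      rw [hLdef, Real.log_div (by norm_num) (ne_of_gt hδ0)]
      ring
    rw [hlogδ, hcdef]
    rw [div_le_iff₀ (by linarith : (0 : ℝ) < 2 * H)]
    have hlog2 : 0 < Real.log 2 := Real.log_pos (by norm_num)
    have hexpand : (n : ℝ) * (13 * H * L / (3 * ((n : ℝ) - 1))) =
        13 * (n : ℝ) * L / (3 * ((n : ℝ) - 1)) * H := by ring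
    have hfrac : 2 * L ≤ 13 * (n : ℝ) * L / (3 * ((n : ℝ) - 1)) := by
      rw [le_div_iff₀ (by linarith : (0 : ℝ) < 3 * ((n : ℝ) - 1))]
      nlinarith [hLpos, hn1]
    have hPH : 2 * L * H ≤ 13 * (n : ℝ) * L / (3 * ((n : ℝ) - 1)) * H :=
      mul_le_mul_of_nonneg_right hfrac hH.le
    rw [hexpand]
    nlinarith [hPH, mul_pos hlog2 hH]
  -- from toReal bound to the goal
  set G : Set Ω := {ω | μ0 ≤ 2 / (n : ℝ) * ∑ i, Z i ω + c} with hGdef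
  have hGmeas : MeasurableSet G := by
    apply measurableSet_le measurable_const
    exact ((Finset.measurable_sum Finset.univ (fun i _ => hmeas i)).const_mul _).add_const c
  have hsubset : Gᶜ ⊆ {ω | (∑ i, Z i) ω ≤ ε} := by
    intro ω hω
    simp only [hGdef, Set.mem_compl_iff, Set.mem_setOf_eq, not_le] at hω
    simp only [Set.mem_setOf_eq, Finset.sum_apply, hεdef]
    set s : ℝ := ∑ i, Z i ω with hsdef
    have h2 : 2 / (n : ℝ) * s < μ0 - c := by linarith
    have h3 : ((n : ℝ) / 2) * (2 / (n : ℝ) * s) < ((n : ℝ) / 2) * (μ0 - c) :=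
      mul_lt_mul_of_pos_left h2 (by positivity)
    have h4 : ((n : ℝ) / 2) * (2 / (n : ℝ) * s) = s := by
      field_simp
    have h5 : ((n : ℝ) / 2) * (μ0 - c) = (n : ℝ) * (μ0 - c) / 2 := by ring
    linarith
  have hcompl : ℙ Gᶜ ≤ ENNReal.ofReal δ := by
    refine le_trans (measure_mono hsubset) ?_
    rw [← ENNReal.ofReal_toReal (measure_ne_top ℙ _)]
    exact ENNReal.ofReal_le_ofReal hkey
  have : ENNReal.ofReal (1 - δ) ≤ ℙ G := by
    have h1 : ℙ G = 1 - ℙ Gᶜ := by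
      rw [measure_compl hGmeas (measure_ne_top _ _), measure_univ,
        ENNReal.sub_sub_cancel ENNReal.one_ne_top prob_le_one]
    rw [h1]
    rw [ENNReal.ofReal_sub _ hδ0.le]
    simp only [ENNReal.ofReal_one]
    exact tsub_le_tsub_left hcompl 1
  exact this
end

section
/- For all matrices X, X' ∈ ℝ^{C×m}, every label y ∈ {1,…,C}, and every feature vector s ∈ ℝ^m with ‖s‖_2 ≤ 1: |f(X; (y,s)) − f(X'; (y,s))| ≤ 2 ‖X − X'‖_{2,∞}. In other words, each sample loss of multivariate logistic regression with unit-norm features is 2-Lipschitz with respect to the ‖·‖_{2,∞} norm. -/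
/-!
The log-softmax `u ↦ u_y - log ∑_c exp u_c` is 2-Lipschitz for the sup norm on the logits:
each of its two terms is 1-Lipschitz, the log-sum-exp because shifting every logit by at most
`B` multiplies `∑_c exp u_c` by at most `exp B`. By Cauchy–Schwarz and `‖s‖₂ ≤ 1`, the logits
`(X s)_c` and `(X' s)_c` differ by at most `‖X_c - X'_c‖₂ ≤ ‖X - X'‖_{2,∞}`.
-/

open Finset Real

theorem Finset.abs_sum_mul_le_sqrt_mul_sqrt {ι : Type*} (s : Finset ι) (f g : ι → ℝ) :
    |∑ i ∈ s, f i * g i| ≤ √(∑ i ∈ s, f i ^ 2) * √(∑ i ∈ s, g i ^ 2) :=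
  (abs_le_sqrt (sum_mul_sq_le_sq_mul_sq s f g)).trans_eq
    (sqrt_mul (sum_nonneg fun _ _ => sq_nonneg _) _)

section LogSumExp

variable {ι : Type*} [Fintype ι]

theorem Real.log_sum_exp_sub_log_sum_exp_le [Nonempty ι] {u v : ι → ℝ} {B : ℝ}
    (h : ∀ i, u i - v i ≤ B) :
    log (∑ i, exp (u i)) - log (∑ i, exp (v i)) ≤ B := by
  have hv : 0 < ∑ i, exp (v i) := sum_pos (fun i _ => exp_pos _) univ_nonempty
  have hu : 0 < ∑ i, exp (u i) := sum_pos (fun i _ => exp_pos _) univ_nonempty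
  have hsum : ∑ i, exp (u i) ≤ exp B * ∑ i, exp (v i) := by
    rw [mul_sum]
    gcongr with i
    rw [← exp_add]
    exact exp_le_exp.2 (by linarith [h i])
  have := log_le_log hu hsum
  rw [log_mul (exp_ne_zero _) hv.ne', log_exp] at this
  linarith

theorem Real.abs_log_sum_exp_sub_log_sum_exp_le [Nonempty ι] {u v : ι → ℝ} {B : ℝ}
    (h : ∀ i, |u i - v i| ≤ B) :
    |log (∑ i, exp (u i)) - log (∑ i, exp (v i))| ≤ B :=
  abs_sub_le_iff.2
    ⟨log_sum_exp_sub_log_sum_exp_le fun i => (abs_sub_le_iff.1 (h i)).1,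
      log_sum_exp_sub_log_sum_exp_le fun i => (abs_sub_le_iff.1 (h i)).2⟩

theorem Real.log_exp_div_sum_exp (u : ι → ℝ) (y : ι) :
    log (exp (u y) / ∑ i, exp (u i)) = u y - log (∑ i, exp (u i)) := by
  have hpos : 0 < ∑ i, exp (u i) :=
    (exp_pos _).trans_le (single_le_sum (fun i _ => (exp_pos (u i)).le) (mem_univ y))
  rw [log_div (exp_ne_zero _) hpos.ne', log_exp]

theorem Real.abs_log_softmax_sub_le {u v : ι → ℝ} (y : ι) {B : ℝ}
    (h : ∀ i, |u i - v i| ≤ B) :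
    |log (exp (u y) / ∑ i, exp (u i)) - log (exp (v y) / ∑ i, exp (v i))| ≤ 2 * B := by
  have : Nonempty ι := ⟨y⟩
  rw [log_exp_div_sum_exp, log_exp_div_sum_exp]
  calc |u y - log (∑ i, exp (u i)) - (v y - log (∑ i, exp (v i)))|
      = |(u y - v y) - (log (∑ i, exp (u i)) - log (∑ i, exp (v i)))| := by ring_nf
    _ ≤ |u y - v y| + |log (∑ i, exp (u i)) - log (∑ i, exp (v i))| := abs_sub _ _
    _ ≤ B + B := add_le_add (h y) (abs_log_sum_exp_sub_log_sum_exp_le h)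
    _ = 2 * B := by ring

end LogSumExp

theorem abs_sum_mul_sub_sum_mul_le_sqrt {m : ℕ} (x x' s : Fin m → ℝ)
    (hs : √(∑ j, s j ^ 2) ≤ 1) :
    |∑ j, x j * s j - ∑ j, x' j * s j| ≤ √(∑ j, (x j - x' j) ^ 2) := by
  rw [← sum_sub_distrib]
  simp only [← sub_mul]
  calc |∑ j, (x j - x' j) * s j|
      ≤ √(∑ j, (x j - x' j) ^ 2) * √(∑ j, s j ^ 2) := abs_sum_mul_le_sqrt_mul_sqrt _ _ _
    _ ≤ √(∑ j, (x j - x' j) ^ 2) := mul_le_of_le_one_right (sqrt_nonneg _) hs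

theorem stmt17_general
    {C m : ℕ}
    (X X' : Fin C → Fin m → ℝ)
    (y : Fin C) (s : Fin m → ℝ)
    (hs : Real.sqrt (∑ j, s j ^ 2) ≤ 1) :
    |Real.log (Real.exp (∑ j, X y j * s j) / ∑ c, Real.exp (∑ j, X c j * s j)) -
        Real.log (Real.exp (∑ j, X' y j * s j) / ∑ c, Real.exp (∑ j, X' c j * s j))| ≤
      2 * ⨆ c, Real.sqrt (∑ j, (X c j - X' c j) ^ 2) :=
  abs_log_softmax_sub_le y fun c =>
    (abs_sum_mul_sub_sum_mul_le_sqrt (X c) (X' c) s hs).trans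
      (le_ciSup (f := fun c => √(∑ j, (X c j - X' c j) ^ 2)) (Set.finite_range _).bddAbove c)

/-- Lipschitzness of the multivariate logistic regression sample
loss (Proposition C.1).  Rows of the weight matrix are `X c : Fin m → ℝ`; the
softmax loss is `f(X;(y,s)) = log(exp((Xs)_y) / Σ_c exp((Xs)_c))` with
`(Xs)_c = Σ_j X c j * s j`.  For any feature vector `s` with Euclidean norm at
most `1` and any label `y`:
`|f(X;(y,s)) - f(X';(y,s))| ≤ 2 ‖X - X'‖_{2,∞}`, where
`‖X‖_{2,∞} = max_c ‖X c‖₂` is the maximum Euclidean row norm. -/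
theorem stmt17
    {C m : ℕ} (hC : 0 < C)
    (X X' : Fin C → Fin m → ℝ)
    (y : Fin C) (s : Fin m → ℝ)
    (hs : Real.sqrt (∑ j, s j ^ 2) ≤ 1) :
    |Real.log (Real.exp (∑ j, X y j * s j) / ∑ c, Real.exp (∑ j, X c j * s j)) -
        Real.log (Real.exp (∑ j, X' y j * s j) / ∑ c, Real.exp (∑ j, X' c j * s j))| ≤
      2 * ⨆ c, Real.sqrt (∑ j, (X c j - X' c j) ^ 2) :=
  stmt17_general X X' y s hs
end
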